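/- arXiv:2602.19500 — 5 statements merged into one kernel-verified Lean document; each statement's English description precedes it below -/
import Mathlib

section
/- For α > 0, the inverse-gamma quantile function is strictly decreasing in the shape parameter: if F(α;x) = ∫₀^x ρ_α(y) dy with ρ_α(y) = y^{-α-1} e^{-1/y} / Γ(α), and H(α;·) denotes the inverse of F(α;·) on (0,1), then ∂_α log H(α;x) = -(1/(y·ρ_α(y))) · Cov(-log X, 1[X ≤ y]) < 0, where y = H(α;x) and X ~ Gamma⁻¹(α). In particular, for each fixed x ∈ (0,1), α ↦ H(α;x) is strictly decreasing. -/
open MeasureTheory Real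

/-- Density of the inverse-gamma distribution with shape `a` at `y`. -/
noncomputable def invGammaPDF (a y : ℝ) : ℝ :=
  y ^ (-a - 1) * Real.exp (-y⁻¹) / Real.Gamma a

/-- CDF of the inverse-gamma distribution: `F(a; x) = ∫₀^x ρ_a(y) dy`. -/
noncomputable def invGammaCDF (a x : ℝ) : ℝ :=
  ∫ y in Set.Ioc (0 : ℝ) x, invGammaPDF a y

/-- `Cov(-log X, 1[X ≤ y])` for `X ~ Gamma⁻¹(a)`. -/
noncomputable def invGammaCov (a y : ℝ) : ℝ :=
  (∫ z in Set.Ioi (0 : ℝ), (if z ≤ y then -Real.log z else 0) * invGammaPDF a z)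
    - (∫ z in Set.Ioi (0 : ℝ), (-Real.log z) * invGammaPDF a z)
      * (∫ z in Set.Ioi (0 : ℝ), (if z ≤ y then (1 : ℝ) else 0) * invGammaPDF a z)

open Set Filter Topology

/-!
Write `F(a, y) = invGammaCDF a y`. Differentiating under the integral sign (the factor `|log z|`
is dominated by `z ^ δ + z ^ (-δ)`, i.e. by kernels of shapes `a ∓ δ`) gives
`∂ₐF(a, y) = Cov(-log X, 1[X ≤ y])`, which is positive because `-log X` and `1[X ≤ y]` are both
decreasing in `X`; and `∂_y F(a, y) = ρₐ(y) > 0`. So `F` is strictly increasing in both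
variables, which makes `H` continuous and strictly decreasing in the shape, and the mean value
theorem in `y` applied to `F(a, H(a, x)) = F(α, H(α, x))` gives `∂ₐH = -∂ₐF / ∂_y F`.
-/

lemma setIntegral_pos_of_forall_pos {X : Type*} [MeasurableSpace X] {μ : Measure X} {f : X → ℝ}
    {s : Set X} (hs : MeasurableSet s) (hμs : μ s ≠ 0) (hf : IntegrableOn f s μ)
    (hpos : ∀ z ∈ s, 0 < f z) : 0 < ∫ z in s, f z ∂μ := by
  rw [setIntegral_pos_iff_support_of_nonneg_ae
    ((ae_restrict_iff' hs).2 (Eventually.of_forall fun z hz => (hpos z hz).le)) hf,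
    inter_eq_right.2 (show s ⊆ Function.support f from fun z hz => (hpos z hz).ne')]
  exact pos_iff_ne_zero.2 hμs

lemma rpow_le_rpow_add_rpow {z p q r : ℝ} (hz : 0 < z) (hp : p ∈ Icc q r) :
    z ^ p ≤ z ^ q + z ^ r := by
  rcases le_total 1 z with h1 | h1
  · linarith [rpow_le_rpow_of_exponent_le h1 hp.2, rpow_pos_of_pos hz q]
  · linarith [rpow_le_rpow_of_exponent_ge hz h1 hp.1, rpow_pos_of_pos hz r]

lemma abs_log_le_rpow_add_rpow_div {z ε : ℝ} (hz : 0 < z) (hε : 0 < ε) :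
    |log z| ≤ (z ^ ε + z ^ (-ε)) / ε := by
  have hle := log_le_rpow_div hz.le hε
  have hge := log_le_rpow_div (inv_pos.2 hz).le hε
  rw [log_inv, inv_rpow hz.le, ← rpow_neg hz.le] at hge
  have h₁ : 0 ≤ z ^ ε / ε := by positivity
  have h₂ : 0 ≤ z ^ (-ε) / ε := by positivity
  rw [abs_le, add_div]
  constructor <;> linarith

theorem hasDerivAt_of_mul_sub_eq {u v g : ℝ → ℝ} {α c L : ℝ} (hv : HasDerivAt v c α)
    (hg : Tendsto g (𝓝 α) (𝓝 L)) (hL : L ≠ 0)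
    (h : ∀ᶠ a in 𝓝 α, g a * (u a - u α) = v a - v α) : HasDerivAt u (c / L) α := by
  rw [hasDerivAt_iff_tendsto_slope] at hv ⊢
  have hg' : Tendsto g (𝓝[≠] α) (𝓝 L) := hg.mono_left nhdsWithin_le_nhds
  refine (hv.div hg' hL).congr' ?_
  filter_upwards [nhdsWithin_le_nhds h, hg'.eventually_ne hL] with a ha hga
  rw [Pi.div_apply, slope_def_field, slope_def_field, ← ha]
  field_simp

lemma exists_mem_uIcc_sub_eq_mul {f f' : ℝ → ℝ} {u v : ℝ}
    (hf : ∀ y ∈ uIcc u v, HasDerivAt f (f' y) y) :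
    ∃ ξ ∈ uIcc u v, f v - f u = f' ξ * (v - u) := by
  wlog huv : u ≤ v generalizing u v
  · obtain ⟨ξ, hξ, h⟩ := this (uIcc_comm u v ▸ hf) (le_of_not_ge huv)
    exact ⟨ξ, uIcc_comm u v ▸ hξ, by linear_combination -h⟩
  rcases huv.eq_or_lt with rfl | huv
  · exact ⟨u, by simp, by ring⟩
  rw [uIcc_of_le huv.le] at hf ⊢
  obtain ⟨ξ, hξ, h⟩ := exists_hasDerivAt_eq_slope f f' huv
    (fun y hy => (hf y hy).continuousAt.continuousWithinAt)
    (fun y hy => hf y (Ioo_subset_Icc_self hy))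
  refine ⟨ξ, Ioo_subset_Icc_self hξ, ?_⟩
  rw [h, div_mul_cancel₀ _ (sub_ne_zero.2 huv.ne')]

lemma continuousAt_of_apply_eq_of_strictMonoOn {F : ℝ → ℝ → ℝ} {H : ℝ → ℝ} {α : ℝ}
    {s : Set ℝ} (hs : s ∈ 𝓝 (H α)) (hHs : ∀ᶠ a in 𝓝 α, H a ∈ s)
    (hmono : ∀ᶠ a in 𝓝 α, StrictMonoOn (F a) s)
    (hcont : ∀ y ∈ s, ContinuousAt (fun a => F a y) α)
    (heq : ∀ᶠ a in 𝓝 α, F a (H a) = F α (H α)) : ContinuousAt H α := by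
  rw [ContinuousAt, Metric.tendsto_nhds]
  intro ε hε
  obtain ⟨r, hr, hrs⟩ := Metric.mem_nhds_iff.1 hs
  rw [ball_eq_Ioo] at hrs
  set δ := min ε (r / 2)
  have hδε : δ ≤ ε := min_le_left _ _
  have hδr : δ ≤ r / 2 := min_le_right _ _
  have hδ : 0 < δ := lt_min hε (half_pos hr)
  have hlo : H α - δ ∈ s := hrs ⟨by linarith, by linarith⟩
  have hhi : H α + δ ∈ s := hrs ⟨by linarith, by linarith⟩
  have hmonoα := hmono.self_of_nhds
  have hHα := hHs.self_of_nhds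
  filter_upwards [(hcont _ hlo).eventually_lt_const (hmonoα hlo hHα (by linarith)),
    (hcont _ hhi).eventually_const_lt (hmonoα hHα hhi (by linarith)), hHs, hmono, heq]
    with a hloa hhia hHa hmonoa heqa
  rw [← heqa] at hloa hhia
  have h₁ := (hmonoa.lt_iff_lt hlo hHa).1 hloa
  have h₂ := (hmonoa.lt_iff_lt hHa hhi).1 hhia
  rw [dist_eq, abs_lt]
  constructor <;> linarith

theorem hasDerivAt_of_apply_eq {F f : ℝ → ℝ → ℝ} {H : ℝ → ℝ} {α c : ℝ} {s : Set ℝ}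
    [s.OrdConnected] (hH : ContinuousAt H α) (hHs : ∀ᶠ a in 𝓝 α, H a ∈ s)
    (heq : ∀ᶠ a in 𝓝 α, F a (H a) = F α (H α))
    (hFa : HasDerivAt (fun a => F a (H α)) c α)
    (hFy : ∀ᶠ a in 𝓝 α, ∀ y ∈ s, HasDerivAt (F a) (f a y) y)
    (hf : ContinuousAt (Function.uncurry f) (α, H α)) (hf0 : f α (H α) ≠ 0) :
    HasDerivAt H (-c / f α (H α)) α := by
  have hHα := hHs.self_of_nhds
  have hmvt : ∀ᶠ a in 𝓝 α, ∃ ξ ∈ uIcc (H α) (H a),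
      F a (H a) - F a (H α) = f a ξ * (H a - H α) := by
    filter_upwards [hHs, hFy] with a hHa hFya
    exact exists_mem_uIcc_sub_eq_mul fun y hy => hFya y (OrdConnected.uIcc_subset ‹_› hHα hHa hy)
  obtain ⟨ξ, hξ⟩ := hmvt.choice
  have hξ_tendsto : Tendsto ξ (𝓝 α) (𝓝 (H α)) := by
    have hmin : Tendsto (fun a => min (H α) (H a)) (𝓝 α) (𝓝 (H α)) := by
      simpa using (tendsto_const_nhds (x := H α)).min hH
    have hmax : Tendsto (fun a => max (H α) (H a)) (𝓝 α) (𝓝 (H α)) := by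
      simpa using (tendsto_const_nhds (x := H α)).max hH
    exact tendsto_of_tendsto_of_tendsto_of_le_of_le' hmin hmax
      (hξ.mono fun a ha => ha.1.1) (hξ.mono fun a ha => ha.1.2)
  refine hasDerivAt_of_mul_sub_eq hFa.neg (hf.tendsto.comp (tendsto_id.prodMk_nhds hξ_tendsto))
    hf0 ?_
  filter_upwards [hξ, heq] with a ha heqa
  simp only [Function.comp_apply, Function.uncurry_apply_pair, id, Pi.neg_apply]
  linear_combination heqa - ha.2

noncomputable def invGammaKernel (a z : ℝ) : ℝ := z ^ (-a - 1) * exp (-z⁻¹)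

section invGammaKernel

variable {a z : ℝ}

lemma invGammaPDF_eq_div (a z : ℝ) : invGammaPDF a z = invGammaKernel a z / Gamma a := rfl

lemma invGammaKernel_pos (hz : 0 < z) : 0 < invGammaKernel a z := by
  unfold invGammaKernel; positivity

lemma measurable_invGammaKernel (a : ℝ) : Measurable (invGammaKernel a) := by
  unfold invGammaKernel; fun_prop

lemma continuousAt_uncurry_invGammaKernel {y : ℝ} (hy : 0 < y) :
    ContinuousAt (Function.uncurry invGammaKernel) (a, y) :=
  (continuousAt_snd.rpow (continuousAt_fst.neg.sub continuousAt_const) (.inl hy.ne')).mul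
    (continuousAt_snd.inv₀ hy.ne').neg.rexp

lemma hasDerivAt_invGammaKernel_shape (hz : 0 < z) (a : ℝ) :
    HasDerivAt (fun b => invGammaKernel b z) (-log z * invGammaKernel a z) a := by
  refine ((((hasDerivAt_id a).neg.sub_const 1).const_rpow hz).mul_const (exp (-z⁻¹))).congr_deriv ?_
  simp only [invGammaKernel, Pi.neg_apply, id_eq]
  ring

/-- The substitution `z = t⁻¹` turns the kernel into the integrand of `Γ(a)`. -/
lemma invGammaKernel_eq_comp_inv (hz : 0 < z) :
    invGammaKernel a z =
      (|(-1 : ℝ)| * z ^ ((-1 : ℝ) - 1)) • (exp (-z ^ (-1 : ℝ)) * (z ^ (-1 : ℝ)) ^ (a - 1)) := by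
  rw [rpow_neg_one, inv_rpow hz.le, ← rpow_neg hz.le, smul_eq_mul, invGammaKernel,
    show -a - 1 = ((-1 : ℝ) - 1) + -(a - 1) by ring, rpow_add hz]
  simp only [abs_neg, abs_one, one_mul]
  ring

lemma integrableOn_invGammaKernel (ha : 0 < a) {s : Set ℝ} (hs : s ⊆ Ioi 0) :
    IntegrableOn (invGammaKernel a) s :=
  (((integrableOn_Ioi_comp_rpow_iff (fun t => exp (-t) * t ^ (a - 1)) (by norm_num)).2
    (GammaIntegral_convergent ha)).congr_fun (fun _ hz => (invGammaKernel_eq_comp_inv hz).symm)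
    measurableSet_Ioi).mono_set hs

lemma integral_invGammaKernel (ha : 0 < a) : ∫ z in Ioi 0, invGammaKernel a z = Gamma a := by
  rw [Gamma_eq_integral ha,
    ← integral_comp_rpow_Ioi (fun t => exp (-t) * t ^ (a - 1)) (by norm_num : (-1 : ℝ) ≠ 0)]
  exact setIntegral_congr_fun measurableSet_Ioi fun _ hz => invGammaKernel_eq_comp_inv hz

lemma invGammaKernel_le_add {b p q : ℝ} (hz : 0 < z) (hb : b ∈ Icc p q) :
    invGammaKernel b z ≤ invGammaKernel p z + invGammaKernel q z := by
  unfold invGammaKernel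
  rw [← add_mul, add_comm]
  gcongr
  exact rpow_le_rpow_add_rpow hz ⟨by linarith [hb.2], by linarith [hb.1]⟩

lemma abs_log_mul_invGammaKernel_le {δ : ℝ} (hz : 0 < z) (hδ : 0 < δ) :
    |log z| * invGammaKernel a z ≤ (invGammaKernel (a - δ) z + invGammaKernel (a + δ) z) / δ := by
  have hshift : ∀ t, z ^ t * invGammaKernel a z = invGammaKernel (a - t) z := fun t => by
    rw [invGammaKernel, invGammaKernel, ← mul_assoc, ← rpow_add hz]
    ring_nf
  calc |log z| * invGammaKernel a z ≤ (z ^ δ + z ^ (-δ)) / δ * invGammaKernel a z :=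
        mul_le_mul_of_nonneg_right (abs_log_le_rpow_add_rpow_div hz hδ)
          (invGammaKernel_pos hz).le
    _ = _ := by rw [div_mul_eq_mul_div, add_mul, hshift, hshift, sub_neg_eq_add]

lemma integrableOn_log_mul_invGammaKernel (ha : 0 < a) {s : Set ℝ} (hs : MeasurableSet s)
    (hs0 : s ⊆ Ioi 0) : IntegrableOn (fun z => log z * invGammaKernel a z) s := by
  refine Integrable.mono' (((integrableOn_invGammaKernel (a := a - a / 2) (by linarith) hs0).add
    (integrableOn_invGammaKernel (a := a + a / 2) (by linarith) hs0)).div_const (a / 2))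
    (measurable_log.mul (measurable_invGammaKernel a)).aestronglyMeasurable
    ((ae_restrict_iff' hs).2 (Eventually.of_forall fun z hz => ?_))
  rw [norm_mul, norm_of_nonneg (invGammaKernel_pos (hs0 hz)).le, norm_eq_abs]
  exact abs_log_mul_invGammaKernel_le (hs0 hz) (half_pos ha)

lemma hasDerivAt_setIntegral_invGammaKernel {α : ℝ} (hα : 0 < α) {s : Set ℝ}
    (hs : MeasurableSet s) (hs0 : s ⊆ Ioi 0) :
    HasDerivAt (fun a => ∫ z in s, invGammaKernel a z)
      (∫ z in s, -log z * invGammaKernel α z) α := by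
  obtain ⟨δ, hδ, hδα⟩ : ∃ δ, 0 < δ ∧ 2 * δ < α := ⟨α / 4, by positivity, by linarith⟩
  have hint : ∀ b, 0 < b → IntegrableOn (invGammaKernel b) s :=
    fun b hb => integrableOn_invGammaKernel hb hs0
  refine (hasDerivAt_integral_of_dominated_loc_of_deriv_le (Metric.ball_mem_nhds α hδ)
    (F' := fun b z => -log z * invGammaKernel b z)
    (bound := fun z =>
      (invGammaKernel (α - 2 * δ) z + 2 * invGammaKernel α z + invGammaKernel (α + 2 * δ) z) / δ)
    (Eventually.of_forall fun b => (measurable_invGammaKernel b).aestronglyMeasurable)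
    (hint α hα) ((measurable_log.neg.mul (measurable_invGammaKernel α)).aestronglyMeasurable)
    ?_ ((((hint _ (by linarith)).add ((hint α hα).const_mul 2)).add
      (hint _ (by linarith))).div_const δ) ?_).2
  · refine (ae_restrict_iff' hs).2 (Eventually.of_forall fun z hz b hb => ?_)
    have hz0 : 0 < z := hs0 hz
    rw [Metric.mem_ball, dist_eq, abs_lt] at hb
    rw [norm_mul, norm_neg, norm_of_nonneg (invGammaKernel_pos hz0).le, norm_eq_abs]
    refine (abs_log_mul_invGammaKernel_le hz0 hδ).trans (div_le_div_of_nonneg_right ?_ hδ.le)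
    linarith [invGammaKernel_le_add (b := b - δ) (p := α - 2 * δ) (q := α) hz0
        ⟨by linarith, by linarith⟩,
      invGammaKernel_le_add (b := b + δ) (p := α) (q := α + 2 * δ) hz0 ⟨by linarith, by linarith⟩]
  · exact (ae_restrict_iff' hs).2 (Eventually.of_forall fun z hz b _ =>
      hasDerivAt_invGammaKernel_shape (hs0 hz) b)

end invGammaKernel

section invGammaPDF

variable {a y : ℝ}

lemma invGammaPDF_pos (ha : 0 < a) (hy : 0 < y) : 0 < invGammaPDF a y :=
  div_pos (invGammaKernel_pos hy) (Gamma_pos_of_pos ha)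

lemma integrableOn_invGammaPDF (ha : 0 < a) {s : Set ℝ} (hs : s ⊆ Ioi 0) :
    IntegrableOn (invGammaPDF a) s :=
  (integrableOn_invGammaKernel ha hs).div_const _

lemma integrableOn_neg_log_mul_invGammaPDF (ha : 0 < a) {s : Set ℝ} (hs : MeasurableSet s)
    (hs0 : s ⊆ Ioi 0) : IntegrableOn (fun z => -log z * invGammaPDF a z) s := by
  have h := (integrableOn_log_mul_invGammaKernel ha hs hs0).neg.div_const (Gamma a)
  simp only [Pi.neg_apply, ← neg_mul, mul_div_assoc] at h
  exact h

lemma integral_invGammaPDF (ha : 0 < a) : ∫ z in Ioi 0, invGammaPDF a z = 1 := by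
  simp_rw [invGammaPDF_eq_div]
  rw [integral_div, integral_invGammaKernel ha, div_self (Gamma_pos_of_pos ha).ne']

lemma continuousAt_uncurry_invGammaPDF (ha : 0 < a) (hy : 0 < y) :
    ContinuousAt (Function.uncurry invGammaPDF) (a, y) :=
  (continuousAt_uncurry_invGammaKernel hy).div
    ((differentiableAt_Gamma fun m => by linarith [m.cast_nonneg (α := ℝ)]).continuousAt.comp
      continuousAt_fst)
    (Gamma_pos_of_pos ha).ne'

lemma hasDerivAt_invGammaCDF (ha : 0 < a) (hy : 0 < y) :
    HasDerivAt (invGammaCDF a) (invGammaPDF a y) y := by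
  have heq : (fun t => ∫ z in 0..t, invGammaPDF a z) =ᶠ[𝓝 y] invGammaCDF a := by
    filter_upwards [eventually_gt_nhds hy] with t ht
    exact intervalIntegral.integral_of_le ht.le
  refine (intervalIntegral.integral_hasDerivAt_right ?_ ?_ ?_).congr_of_eventuallyEq heq.symm
  · exact (intervalIntegrable_iff_integrableOn_Ioc_of_le hy.le).2
      (integrableOn_invGammaPDF ha fun z hz => hz.1)
  · exact ((measurable_invGammaKernel a).div_const _).aestronglyMeasurable
      |>.stronglyMeasurableAtFilter
  · exact (continuousAt_uncurry_invGammaPDF ha hy).comp (continuousAt_const.prodMk continuousAt_id)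

lemma invGammaCDF_strictMonoOn (ha : 0 < a) : StrictMonoOn (invGammaCDF a) (Ioi 0) :=
  strictMonoOn_of_deriv_pos (convex_Ioi 0)
    (fun y hy => (hasDerivAt_invGammaCDF ha hy).continuousAt.continuousWithinAt)
    fun y hy => by
      rw [interior_Ioi] at hy
      rw [(hasDerivAt_invGammaCDF ha hy).deriv]
      exact invGammaPDF_pos ha hy

lemma hasDerivAt_setIntegral_invGammaPDF_shape {α : ℝ} (hα : 0 < α) {s : Set ℝ}
    (hs : MeasurableSet s) (hs0 : s ⊆ Ioi 0) :
    HasDerivAt (fun a => ∫ z in s, invGammaPDF a z)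
      ((∫ z in s, -log z * invGammaPDF α z)
        - (∫ z in Ioi 0, -log z * invGammaPDF α z) * ∫ z in s, invGammaPDF α z) α := by
  have hΓ : HasDerivAt Gamma (∫ z in Ioi 0, -log z * invGammaKernel α z) α :=
    (hasDerivAt_setIntegral_invGammaKernel hα measurableSet_Ioi subset_rfl).congr_of_eventuallyEq
      ((eventually_gt_nhds hα).mono fun a ha => (integral_invGammaKernel ha).symm)
  have hΓα := (Gamma_pos_of_pos hα).ne'
  simp_rw [invGammaPDF_eq_div, ← mul_div_assoc, integral_div]
  refine ((hasDerivAt_setIntegral_invGammaKernel hα hs hs0).div hΓ hΓα).congr_deriv ?_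
  field_simp

lemma invGammaCov_eq (a y : ℝ) :
    invGammaCov a y = (∫ z in Ioc 0 y, -log z * invGammaPDF a z)
      - (∫ z in Ioi 0, -log z * invGammaPDF a z) * invGammaCDF a y := by
  have hIoc : ∀ f : ℝ → ℝ, ∫ z in Ioi 0, (if z ≤ y then f z else 0) = ∫ z in Ioc 0 y, f z := by
    intro f
    rw [← Iic_inter_Ioi, ← Measure.restrict_restrict measurableSet_Iic,
      ← integral_indicator measurableSet_Iic]
    rfl
  simp only [invGammaCov, invGammaCDF, ite_mul, zero_mul, one_mul, hIoc]

lemma hasDerivAt_invGammaCDF_shape {α : ℝ} (hα : 0 < α) (y : ℝ) :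
    HasDerivAt (fun a => invGammaCDF a y) (invGammaCov α y) α := by
  rw [invGammaCov_eq]
  exact hasDerivAt_setIntegral_invGammaPDF_shape hα measurableSet_Ioc fun z hz => hz.1

lemma invGammaCov_pos (ha : 0 < a) (hy : 0 < y) : 0 < invGammaCov a y := by
  have hIoi : Ioi y ⊆ Ioi 0 := Ioi_subset_Ioi hy.le
  have hIoc : Ioc 0 y ⊆ Ioi 0 := fun z hz => hz.1
  set P := invGammaCDF a y
  set Q := ∫ z in Ioi y, invGammaPDF a z
  set Ψ := ∫ z in Ioc 0 y, -log z * invGammaPDF a z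
  set B := ∫ z in Ioi y, -log z * invGammaPDF a z
  have hPQ : P + Q = 1 := by
    rw [← integral_invGammaPDF ha, ← Ioc_union_Ioi_eq_Ioi hy.le, setIntegral_union
      Ioc_disjoint_Ioi_same measurableSet_Ioi (integrableOn_invGammaPDF ha hIoc)
      (integrableOn_invGammaPDF ha hIoi)]
    rfl
  have hΨB : ∫ z in Ioi 0, -log z * invGammaPDF a z = Ψ + B := by
    rw [← Ioc_union_Ioi_eq_Ioi hy.le, setIntegral_union Ioc_disjoint_Ioi_same measurableSet_Ioi
      (integrableOn_neg_log_mul_invGammaPDF ha measurableSet_Ioc hIoc)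
      (integrableOn_neg_log_mul_invGammaPDF ha measurableSet_Ioi hIoi)]
  have hΨ : -log y * P < Ψ := by
    have hΨint := integrableOn_neg_log_mul_invGammaPDF ha measurableSet_Ioc hIoc
    have hPint := (integrableOn_invGammaPDF ha hIoc).const_mul (-log y)
    have hpos : 0 < ∫ z in Ioo 0 y, (-log z * invGammaPDF a z - -log y * invGammaPDF a z) :=
      setIntegral_pos_of_forall_pos measurableSet_Ioo (by simp [hy])
        ((hΨint.sub hPint).mono_set Ioo_subset_Ioc_self) fun z hz => by
          rw [← sub_mul]
          exact mul_pos (sub_pos.2 (neg_lt_neg (log_lt_log hz.1 hz.2))) (invGammaPDF_pos ha hz.1)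
    rw [← integral_Ioc_eq_integral_Ioo, integral_sub hΨint hPint, integral_const_mul] at hpos
    exact sub_pos.1 hpos
  have hB : B ≤ -log y * Q := by
    rw [← integral_const_mul]
    exact setIntegral_mono_on (integrableOn_neg_log_mul_invGammaPDF ha measurableSet_Ioi hIoi)
      ((integrableOn_invGammaPDF ha hIoi).const_mul _) measurableSet_Ioi fun z hz =>
        mul_le_mul_of_nonneg_right (neg_le_neg (log_le_log hy hz.le))
          (invGammaPDF_pos ha (hIoi hz)).le
  have hQ : 0 < Q := setIntegral_pos_of_forall_pos measurableSet_Ioi (by simp)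
    (integrableOn_invGammaPDF ha hIoi) fun z hz => invGammaPDF_pos ha (hIoi hz)
  have hP : 0 ≤ P := setIntegral_nonneg measurableSet_Ioc fun z hz => (invGammaPDF_pos ha hz.1).le
  -- `Cov = Ψ Q - B P` since `P + Q = 1`; compare both products with `-log y * P * Q`.
  calc 0 = -log y * P * Q - -log y * Q * P := by ring
    _ < Ψ * Q - B * P := by
      linarith [mul_lt_mul_of_pos_right hΨ hQ, mul_le_mul_of_nonneg_right hB hP]
    _ = invGammaCov a y := by
      rw [invGammaCov_eq, hΨB]
      linear_combination Ψ * hPQ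

lemma invGammaCDF_strictMonoOn_shape (hy : 0 < y) :
    StrictMonoOn (fun a => invGammaCDF a y) (Ioi 0) :=
  strictMonoOn_of_deriv_pos (convex_Ioi 0)
    (fun a ha => (hasDerivAt_invGammaCDF_shape ha y).continuousAt.continuousWithinAt)
    fun a ha => by
      rw [interior_Ioi] at ha
      rw [(hasDerivAt_invGammaCDF_shape ha y).deriv]
      exact invGammaCov_pos ha hy

end invGammaPDF

lemma hasDerivAt_invGamma_quantile {H : ℝ → ℝ} {α x : ℝ} (hα : 0 < α)
    (hH : ∀ᶠ a in 𝓝 α, 0 < H a ∧ invGammaCDF a (H a) = x) :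
    HasDerivAt H (-invGammaCov α (H α) / invGammaPDF α (H α)) α := by
  have hHα := hH.self_of_nhds
  have hpos : ∀ᶠ a in 𝓝 α, 0 < a := eventually_gt_nhds hα
  have hHs : ∀ᶠ a in 𝓝 α, H a ∈ Ioi 0 := hH.mono fun a ha => ha.1
  have heq : ∀ᶠ a in 𝓝 α, invGammaCDF a (H a) = invGammaCDF α (H α) :=
    hH.mono fun a ha => ha.2.trans hHα.2.symm
  have hcont : ContinuousAt H α :=
    continuousAt_of_apply_eq_of_strictMonoOn (Ioi_mem_nhds hHα.1) hHs
      (hpos.mono fun a ha => invGammaCDF_strictMonoOn ha)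
      (fun y _ => (hasDerivAt_invGammaCDF_shape hα y).continuousAt) heq
  exact hasDerivAt_of_apply_eq hcont hHs heq (hasDerivAt_invGammaCDF_shape hα _)
    (hpos.mono fun a ha y hy => hasDerivAt_invGammaCDF ha hy)
    (continuousAt_uncurry_invGammaPDF hα hHα.1) (invGammaPDF_pos hα hHα.1).ne'

lemma strictAntiOn_invGamma_quantile {H : ℝ → ℝ} {x : ℝ}
    (hH : ∀ a ∈ Ioi (0 : ℝ), 0 < H a ∧ invGammaCDF a (H a) = x) : StrictAntiOn H (Ioi 0) := by
  intro a ha b hb hab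
  obtain ⟨hHa, hFa⟩ := hH a ha
  obtain ⟨hHb, hFb⟩ := hH b hb
  refine ((invGammaCDF_strictMonoOn hb).lt_iff_lt hHb hHa).1 ?_
  rw [hFb, ← hFa]
  exact invGammaCDF_strictMonoOn_shape hHa ha hb hab

/-- The inverse-gamma quantile function `H(α; ·)` is strictly decreasing in the shape
parameter: `∂_α log H(α;x) = -(1/(y ρ_α(y))) Cov(-log X, 1[X ≤ y]) < 0` with
`y = H(α;x)`, and for each fixed `x ∈ (0,1)`, `α ↦ H(α;x)` is strictly decreasing. -/
theorem invGamma_quantile_strictAnti_in_shape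
    (H : ℝ → ℝ → ℝ)
    (hH : ∀ a : ℝ, 0 < a → ∀ x ∈ Set.Ioo (0 : ℝ) 1,
      0 < H a x ∧ invGammaCDF a (H a x) = x)
    (α : ℝ) (hα : 0 < α) (x : ℝ) (hx : x ∈ Set.Ioo (0 : ℝ) 1) :
    (HasDerivAt (fun a => Real.log (H a x))
        (-(1 / (H α x * invGammaPDF α (H α x))) * invGammaCov α (H α x)) α
      ∧ -(1 / (H α x * invGammaPDF α (H α x))) * invGammaCov α (H α x) < 0)
    ∧ ∀ a b : ℝ, 0 < a → a < b → H b x < H a x := by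
  have hHx : ∀ a ∈ Ioi (0 : ℝ), 0 < H a x ∧ invGammaCDF a (H a x) = x :=
    fun a ha => hH a ha x hx
  have hy := (hHx α hα).1
  have hderiv := (hasDerivAt_invGamma_quantile hα ((eventually_gt_nhds hα).mono hHx)).log hy.ne'
  have hρ := invGammaPDF_pos hα hy
  have hcov := invGammaCov_pos hα hy
  refine ⟨⟨hderiv.congr_deriv (by field_simp), ?_⟩,
    fun a b ha hab => strictAntiOn_invGamma_quantile hHx ha (ha.trans hab) hab⟩
  have : 0 < 1 / (H α x * invGammaPDF α (H α x)) * invGammaCov α (H α x) := by positivity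
  linarith
end

section
/- Let α > 0, t = t̃/(σN)^{1/3} with t̃ > 0 fixed and σ = -ψ''(α) > 0. Let X₁,...,X_N be i.i.d. Gamma⁻¹(α+t) and Y₂,...,Y_N be i.i.d. Gamma⁻¹(α-t), all independent. Set W₁ = log X₁, W_i = log X_i - log Y_i for 2 ≤ i ≤ N, and S_k = Σ_{i=1}^k W_i. Then there exist a constant C > 0 and N₀ ∈ ℕ such that for all N ≥ N₀ and all a > 0, P(max_{1≤k≤N} S_k > a(σN)^{1/3}) ≤ C·e^{-2t̃·a}. -/
open MeasureTheory ProbabilityTheory Real Finset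

/-- The digamma function `ψ = (log Γ)'`. -/
noncomputable def digamma (x : ℝ) : ℝ :=
  deriv (fun y => Real.log (Real.Gamma y)) x

/-- The inverse-gamma distribution with shape parameter `a`. -/
noncomputable def invGammaMeasure (a : ℝ) : Measure ℝ :=
  (volume.restrict (Set.Ioi (0 : ℝ))).withDensity
    (fun y => ENNReal.ofReal (y ^ (-a - 1) * Real.exp (-y⁻¹) / Real.Gamma a))

/-!
Put `λ = 2t`. The moment formula `E[X^λ] = Γ(β - λ)/Γ(β)` for `X ~ Gamma⁻¹(β)` gives, for `i ≥ 2`,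
`E[exp (λ (log X_i - log Y_i))] = Γ(α - t)/Γ(α + t) · Γ(α + t)/Γ(α - t) = 1`, so `exp (λ S_k)` is a
nonnegative martingale with mean `E[X₁^λ] = Γ(α - t)/Γ(α + t)`. Doob's maximal inequality at level
`exp (λ a (σN)^{1/3}) = exp (2 t̃ a)` bounds the probability by `Γ(α - t)/Γ(α + t) · e^{-2 t̃ a}`.
For `N` large, `t ≤ α/2`, and the Gamma ratio is bounded by its maximum on `[0, α/2]`.
-/

open scoped ENNReal

section InverseGamma

-- The substitution `y = x⁻¹` turns Euler's integral for `Γ(s)` into the inverse-gamma integral.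
lemma abs_neg_one_mul_rpow_smul_gammaIntegrand {s x : ℝ} (hx : 0 < x) :
    (|(-1 : ℝ)| * x ^ ((-1 : ℝ) - 1)) • (Real.exp (-x ^ (-1 : ℝ)) * (x ^ (-1 : ℝ)) ^ (s - 1))
      = x ^ (-s - 1) * Real.exp (-x⁻¹) := by
  rw [Real.rpow_neg_one, Real.inv_rpow hx.le, ← Real.rpow_neg hx.le, smul_eq_mul, abs_neg,
    abs_one, one_mul, mul_left_comm, ← Real.rpow_add hx]
  ring_nf

lemma integrableOn_rpow_neg_sub_one_mul_exp_neg_inv {s : ℝ} (hs : 0 < s) :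
    IntegrableOn (fun x : ℝ => x ^ (-s - 1) * Real.exp (-x⁻¹)) (Set.Ioi 0) := by
  refine (IntegrableOn.congr_fun ?_ (fun x hx => abs_neg_one_mul_rpow_smul_gammaIntegrand hx)
    measurableSet_Ioi)
  exact (integrableOn_Ioi_comp_rpow_iff (fun y => Real.exp (-y) * y ^ (s - 1))
    (by norm_num)).2 (Real.GammaIntegral_convergent hs)

lemma integral_rpow_neg_sub_one_mul_exp_neg_inv {s : ℝ} (hs : 0 < s) :
    ∫ x in Set.Ioi 0, x ^ (-s - 1) * Real.exp (-x⁻¹) = Real.Gamma s := by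
  rw [← setIntegral_congr_fun measurableSet_Ioi
    (fun x hx => abs_neg_one_mul_rpow_smul_gammaIntegrand (s := s) hx),
    integral_comp_rpow_Ioi (fun y => Real.exp (-y) * y ^ (s - 1)) (by norm_num),
    Real.Gamma_eq_integral hs]

lemma lintegral_exp_mul_log_invGammaMeasure {β lam : ℝ} (hβ : 0 < β) (hlam : lam < β) :
    ∫⁻ x, ENNReal.ofReal (Real.exp (lam * Real.log x)) ∂invGammaMeasure β
      = ENNReal.ofReal (Real.Gamma (β - lam) / Real.Gamma β) := by
  have hdens : ∀ x ∈ Set.Ioi (0 : ℝ),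
      ENNReal.ofReal (x ^ (-β - 1) * Real.exp (-x⁻¹) / Real.Gamma β)
        * ENNReal.ofReal (Real.exp (lam * Real.log x))
      = ENNReal.ofReal (x ^ (-(β - lam) - 1) * Real.exp (-x⁻¹) / Real.Gamma β) := by
    intro x (hx : 0 < x)
    rw [← ENNReal.ofReal_mul (by positivity), mul_comm lam, ← Real.rpow_def_of_pos hx,
      div_mul_eq_mul_div, mul_right_comm, ← Real.rpow_add hx]
    ring_nf
  rw [invGammaMeasure, lintegral_withDensity_eq_lintegral_mul _ (by fun_prop) (by fun_prop)]
  simp only [Pi.mul_apply]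
  rw [setLIntegral_congr_fun measurableSet_Ioi hdens,
    ← ofReal_integral_eq_lintegral_ofReal
      ((integrableOn_rpow_neg_sub_one_mul_exp_neg_inv (by linarith)).div_const _)
      ((ae_restrict_iff' measurableSet_Ioi).2 (.of_forall fun x (hx : 0 < x) => by positivity)),
    integral_div, integral_rpow_neg_sub_one_mul_exp_neg_inv (by linarith)]

end InverseGamma

section Maximal

variable {Ω : Type*} {m0 : MeasurableSpace Ω} {μ : Measure Ω}

lemma setLIntegral_mul_eq_of_indep {𝓕 𝓖 : MeasurableSpace Ω} (h𝓕 : 𝓕 ≤ m0) (h𝓖 : 𝓖 ≤ m0)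
    (hind : Indep 𝓕 𝓖 μ) {F G : Ω → ℝ≥0∞} (hF : Measurable[𝓕] F) (hG : Measurable[𝓖] G)
    {s : Set Ω} (hs : MeasurableSet[𝓕] s) :
    ∫⁻ ω in s, F ω * G ω ∂μ = (∫⁻ ω in s, F ω ∂μ) * ∫⁻ ω, G ω ∂μ := by
  rw [← lintegral_indicator (h𝓕 _ hs), ← lintegral_indicator (h𝓕 _ hs)]
  simp only [Set.indicator_mul_left]
  exact lintegral_mul_eq_lintegral_mul_lintegral_of_independent_measurableSpace h𝓕 h𝓖 hind
    (hF.indicator hs) hG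

variable {ℱ : Filtration ℕ m0} {M : ℕ → Ω → ℝ≥0∞}

lemma setLIntegral_le_of_le_succ
    (hsub : ∀ k s, MeasurableSet[ℱ k] s → ∫⁻ ω in s, M k ω ∂μ ≤ ∫⁻ ω in s, M (k + 1) ω ∂μ)
    {k n : ℕ} (hkn : k ≤ n) {s : Set Ω} (hs : MeasurableSet[ℱ k] s) :
    ∫⁻ ω in s, M k ω ∂μ ≤ ∫⁻ ω in s, M n ω ∂μ := by
  induction n, hkn using Nat.le_induction with
  | base => rfl
  | succ n hkn ih => exact ih.trans (hsub n s (ℱ.mono hkn s hs))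

theorem lintegral_maximal_ineq (hM : ∀ k, Measurable[ℱ k] (M k))
    (hsub : ∀ k s, MeasurableSet[ℱ k] s → ∫⁻ ω in s, M k ω ∂μ ≤ ∫⁻ ω in s, M (k + 1) ω ∂μ)
    (c : ℝ≥0∞) (n : ℕ) :
    c * μ {ω | ∃ k ≤ n, c ≤ M k ω} ≤ ∫⁻ ω, M n ω ∂μ := by
  set A : ℕ → Set Ω := fun k => {ω | c ≤ M k ω}
  -- `disjointed A k` is the event that `M` first reaches `c` at time `k`
  have hA : ∀ {j k}, j ≤ k → MeasurableSet[ℱ k] (A j) :=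
    fun hjk => measurableSet_le measurable_const ((hM _).mono (ℱ.mono hjk) le_rfl)
  have hD : ∀ k, MeasurableSet[ℱ k] (disjointed A k) := fun k => by
    rw [disjointed_eq_inter_compl]
    exact (hA le_rfl).inter (.biInter (Set.to_countable _) fun j hj => (hA (Nat.le_of_lt hj)).compl)
  have hunion : {ω | ∃ k ≤ n, c ≤ M k ω} = ⋃ k ∈ Finset.range (n + 1), disjointed A k := by
    rw [biUnion_range_succ_disjointed, partialSups_eq_biSup]
    ext ω
    simp [A]
  have hdisj : Set.PairwiseDisjoint ↑(Finset.range (n + 1)) (disjointed A) :=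
    (disjoint_disjointed A).set_pairwise _
  calc c * μ {ω | ∃ k ≤ n, c ≤ M k ω}
      = ∑ k ∈ Finset.range (n + 1), c * μ (disjointed A k) := by
        rw [hunion, measure_biUnion_finset hdisj fun k _ => ℱ.le k _ (hD k), Finset.mul_sum]
    _ ≤ ∑ k ∈ Finset.range (n + 1), ∫⁻ ω in disjointed A k, M k ω ∂μ := by
        gcongr with k
        rw [← setLIntegral_const]
        exact setLIntegral_mono ((hM k).mono (ℱ.le k) le_rfl) fun ω hω => disjointed_subset A k hω
    _ ≤ ∑ k ∈ Finset.range (n + 1), ∫⁻ ω in disjointed A k, M n ω ∂μ :=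
        Finset.sum_le_sum fun k hk =>
          setLIntegral_le_of_le_succ hsub (Finset.mem_range_succ_iff.1 hk) (hD k)
    _ = ∫⁻ ω in ⋃ k ∈ Finset.range (n + 1), disjointed A k, M n ω ∂μ :=
        (lintegral_biUnion_finset hdisj (fun k _ => ℱ.le k _ (hD k)) _).symm
    _ ≤ ∫⁻ ω, M n ω ∂μ := setLIntegral_le_lintegral _ _

end Maximal

section BlockFiltration

variable {Ω ι κ β : Type*} {m0 : MeasurableSpace Ω} [mβ : MeasurableSpace β]

lemma measurable_biSup_comap {f : ι → Ω → β} {S : Set ι} {i : ι} (hi : i ∈ S) :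
    Measurable[⨆ j ∈ S, mβ.comap (f j)] (f i) :=
  (comap_measurable (f i)).mono (le_iSup₂_of_le i hi le_rfl) le_rfl

def blockFiltration (f : ℕ × κ → Ω → β) (hf : ∀ p, Measurable (f p)) : Filtration ℕ m0 where
  seq k := ⨆ p ∈ {p : ℕ × κ | p.1 ≤ k}, mβ.comap (f p)
  mono' _ _ hkl := iSup₂_le fun p hp => le_iSup₂_of_le p (le_trans hp hkl) le_rfl
  le' _ := iSup₂_le fun p _ => (hf p).comap_le

lemma indep_blockFiltration {μ : Measure Ω} {f : ℕ × κ → Ω → β} (hf : ∀ p, Measurable (f p))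
    (hind : iIndepFun f μ) (k : ℕ) :
    Indep (blockFiltration f hf k)
      (⨆ p ∈ {p : ℕ × κ | p.1 = k + 1}, mβ.comap (f p)) μ :=
  indep_iSup_of_disjoint (fun p => (hf p).comap_le) hind.iIndep
    (Set.disjoint_left.2 fun p (hp : p.1 ≤ k) (hp' : p.1 = k + 1) => by omega)

end BlockFiltration

section LogWalk

variable {Ω : Type*} {m0 : MeasurableSpace Ω} {μ : Measure Ω} {X Y : ℕ → Ω → ℝ} {α t : ℝ}

/-- The walk `S_k`; the sum is empty for `k ≤ 1`, so `S_0 = S_1 = log X₁`. -/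
noncomputable def logWalk (X Y : ℕ → Ω → ℝ) (k : ℕ) (ω : Ω) : ℝ :=
  Real.log (X 1 ω) + ∑ i ∈ Finset.Icc 2 k, (Real.log (X i ω) - Real.log (Y i ω))

lemma logWalk_succ {k : ℕ} (hk : 1 ≤ k) (ω : Ω) :
    logWalk X Y (k + 1) ω
      = logWalk X Y k ω + (Real.log (X (k + 1) ω) - Real.log (Y (k + 1) ω)) := by
  rw [logWalk, logWalk, Finset.sum_Icc_succ_top (by omega), add_assoc]

lemma lintegral_exp_mul_log_of_map_eq_invGammaMeasure {V : Ω → ℝ} {β lam : ℝ} (hV : Measurable V)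
    (hlaw : μ.map V = invGammaMeasure β) (hβ : 0 < β) (hlam : lam < β) :
    ∫⁻ ω, ENNReal.ofReal (Real.exp (lam * Real.log (V ω))) ∂μ
      = ENNReal.ofReal (Real.Gamma (β - lam) / Real.Gamma β) := by
  rw [← lintegral_map (f := fun x => ENNReal.ofReal (Real.exp (lam * Real.log x))) (by fun_prop) hV,
    hlaw, lintegral_exp_mul_log_invGammaMeasure hβ hlam]

lemma lintegral_exp_mul_log_sub_log_eq_one {U V : Ω → ℝ} (ht : |t| < α) (hU : Measurable U)
    (hV : Measurable V) (hUV : IndepFun U V μ) (hUlaw : μ.map U = invGammaMeasure (α + t))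
    (hVlaw : μ.map V = invGammaMeasure (α - t)) :
    ∫⁻ ω, ENNReal.ofReal (Real.exp (2 * t * (Real.log (U ω) - Real.log (V ω)))) ∂μ = 1 := by
  obtain ⟨htα', htα⟩ := abs_lt.1 ht
  have hΓadd : 0 < Real.Gamma (α + t) := Real.Gamma_pos_of_pos (by linarith)
  have hΓsub : 0 < Real.Gamma (α - t) := Real.Gamma_pos_of_pos (by linarith)
  have hsplit : ∀ ω, ENNReal.ofReal (Real.exp (2 * t * (Real.log (U ω) - Real.log (V ω))))
      = ENNReal.ofReal (Real.exp (2 * t * Real.log (U ω)))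
        * ENNReal.ofReal (Real.exp (-(2 * t) * Real.log (V ω))) := fun ω => by
    rw [← ENNReal.ofReal_mul (Real.exp_nonneg _), ← Real.exp_add]
    ring_nf
  have hind : IndepFun (fun ω => ENNReal.ofReal (Real.exp (2 * t * Real.log (U ω))))
      (fun ω => ENNReal.ofReal (Real.exp (-(2 * t) * Real.log (V ω)))) μ :=
    hUV.comp (φ := fun x => ENNReal.ofReal (Real.exp (2 * t * Real.log x)))
      (ψ := fun x => ENNReal.ofReal (Real.exp (-(2 * t) * Real.log x))) (by fun_prop) (by fun_prop)
  rw [lintegral_congr hsplit,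
    lintegral_mul_eq_lintegral_mul_lintegral_of_indepFun'' (by fun_prop) (by fun_prop) hind,
    lintegral_exp_mul_log_of_map_eq_invGammaMeasure hU hUlaw (by linarith) (by linarith),
    lintegral_exp_mul_log_of_map_eq_invGammaMeasure hV hVlaw (by linarith) (by linarith),
    show α + t - 2 * t = α - t by ring, show α - t - -(2 * t) = α + t by ring,
    ← ENNReal.ofReal_mul (div_nonneg hΓsub.le hΓadd.le), div_mul_div_comm,
    mul_comm (Real.Gamma (α - t)), div_self (by positivity), ENNReal.ofReal_one]

/-- Time `k` carries `S_{k+1}`, so that the process starts at `S₁ = log X₁`. -/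
noncomputable def expLogWalk (X Y : ℕ → Ω → ℝ) (t : ℝ) (k : ℕ) (ω : Ω) : ℝ≥0∞ :=
  ENNReal.ofReal (Real.exp (2 * t * logWalk X Y (k + 1) ω))

theorem exists_filtration_expLogWalk_martingale (ht : |t| < α)
    (hX : ∀ i, Measurable (X i)) (hY : ∀ i, Measurable (Y i))
    (hind : iIndepFun (fun p : ℕ × Bool => if p.2 then X p.1 else Y p.1) μ)
    (hXlaw : ∀ i, μ.map (X i) = invGammaMeasure (α + t))
    (hYlaw : ∀ i, μ.map (Y i) = invGammaMeasure (α - t)) :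
    ∃ ℱ : Filtration ℕ m0, (∀ k, Measurable[ℱ k] (expLogWalk X Y t k)) ∧
      ∀ k s, MeasurableSet[ℱ k] s →
        ∫⁻ ω in s, expLogWalk X Y t (k + 1) ω ∂μ = ∫⁻ ω in s, expLogWalk X Y t k ω ∂μ := by
  -- block `i` of `f` is `(X (i + 1), Y (i + 1))`, so `expLogWalk X Y t k` only sees blocks `≤ k`
  set f : ℕ × Bool → Ω → ℝ := fun p => if p.2 then X (p.1 + 1) else Y (p.1 + 1)
  have hf : ∀ p, Measurable (f p) := by rintro ⟨i, _ | _⟩ <;> simp [f, hX, hY]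
  have hfind : iIndepFun f μ :=
    hind.precomp (g := fun p : ℕ × Bool => (p.1 + 1, p.2)) fun p q h => by
      simpa [Prod.ext_iff] using h
  set ℱ := blockFiltration f hf
  have hXℱ : ∀ {i k : ℕ}, 1 ≤ i → i ≤ k + 1 → Measurable[ℱ k] (X i) := by
    intro i k h1 h2
    obtain ⟨j, rfl⟩ := Nat.exists_eq_add_of_le' h1
    exact measurable_biSup_comap (f := f) (i := (j, true)) (show j ≤ k by omega)
  have hYℱ : ∀ {i k : ℕ}, 1 ≤ i → i ≤ k + 1 → Measurable[ℱ k] (Y i) := by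
    intro i k h1 h2
    obtain ⟨j, rfl⟩ := Nat.exists_eq_add_of_le' h1
    exact measurable_biSup_comap (f := f) (i := (j, false)) (show j ≤ k by omega)
  have hadapted : ∀ k, Measurable[ℱ k] (expLogWalk X Y t k) := fun k =>
    ((((hXℱ le_rfl (by omega)).log.add (Finset.measurable_sum _ fun i hi =>
      (hXℱ (by grind) (by grind)).log.sub (hYℱ (by grind) (by grind)).log)).const_mul
      _).exp.ennreal_ofReal)
  refine ⟨ℱ, hadapted, fun k s hs => ?_⟩
  have hstep : ∀ ω, expLogWalk X Y t (k + 1) ω = expLogWalk X Y t k ω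
      * ENNReal.ofReal (Real.exp (2 * t * (Real.log (X (k + 2) ω) - Real.log (Y (k + 2) ω)))) :=
    fun ω => by
      rw [expLogWalk, expLogWalk, logWalk_succ (by omega), mul_add, Real.exp_add,
        ENNReal.ofReal_mul (Real.exp_nonneg _)]
  set 𝓖 := ⨆ p ∈ {p : ℕ × Bool | p.1 = k + 1}, MeasurableSpace.comap (f p) inferInstance
  have hX𝓖 : Measurable[𝓖] (X (k + 2)) := measurable_biSup_comap (f := f) (i := (k + 1, true)) rfl
  have hY𝓖 : Measurable[𝓖] (Y (k + 2)) := measurable_biSup_comap (f := f) (i := (k + 1, false)) rfl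
  have hZ : Measurable[𝓖] fun ω =>
      ENNReal.ofReal (Real.exp (2 * t * (Real.log (X (k + 2) ω) - Real.log (Y (k + 2) ω)))) :=
    ((hX𝓖.log.sub hY𝓖.log).const_mul _).exp.ennreal_ofReal
  rw [setLIntegral_congr_fun (ℱ.le k _ hs) fun ω _ => hstep ω,
    setLIntegral_mul_eq_of_indep (ℱ.le k) (iSup₂_le fun p _ => (hf p).comap_le)
      (indep_blockFiltration hf hfind k) (hadapted k) hZ hs,
    lintegral_exp_mul_log_sub_log_eq_one ht (hX _) (hY _)
      (hind.indepFun (i := (k + 2, true)) (j := (k + 2, false)) (by simp)) (hXlaw _) (hYlaw _),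
    mul_one]

theorem measure_exists_logWalk_gt_le (ht : 0 < t) (htα : t < α)
    (hX : ∀ i, Measurable (X i)) (hY : ∀ i, Measurable (Y i))
    (hind : iIndepFun (fun p : ℕ × Bool => if p.2 then X p.1 else Y p.1) μ)
    (hXlaw : ∀ i, μ.map (X i) = invGammaMeasure (α + t))
    (hYlaw : ∀ i, μ.map (Y i) = invGammaMeasure (α - t)) (b : ℝ) (N : ℕ) :
    μ {ω | ∃ k, 1 ≤ k ∧ k ≤ N ∧ b < logWalk X Y k ω}
      ≤ ENNReal.ofReal (Real.Gamma (α - t) / Real.Gamma (α + t) * Real.exp (-(2 * t * b))) := by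
  obtain ⟨ℱ, hadapted, hmart⟩ :=
    exists_filtration_expLogWalk_martingale (abs_lt.2 ⟨by linarith, htα⟩) hX hY hind hXlaw hYlaw
  have hmean : ∀ n, ∫⁻ ω, expLogWalk X Y t n ω ∂μ
      = ENNReal.ofReal (Real.Gamma (α - t) / Real.Gamma (α + t)) := by
    intro n
    induction n with
    | zero =>
      simp only [expLogWalk, logWalk, zero_add, Finset.Icc_eq_empty_of_lt one_lt_two,
        Finset.sum_empty, add_zero]
      rw [lintegral_exp_mul_log_of_map_eq_invGammaMeasure (hX 1) (hXlaw 1) (by linarith)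
        (by linarith), show α + t - 2 * t = α - t by ring]
    | succ n ih => rw [← setLIntegral_univ, hmart n _ MeasurableSet.univ, setLIntegral_univ, ih]
  set c := ENNReal.ofReal (Real.exp (2 * t * b))
  have hsub : {ω | ∃ k, 1 ≤ k ∧ k ≤ N ∧ b < logWalk X Y k ω}
      ⊆ {ω | ∃ k ≤ N, c ≤ expLogWalk X Y t k ω} := by
    rintro ω ⟨k, hk1, hkN, hbk⟩
    refine ⟨k - 1, by omega, ENNReal.ofReal_le_ofReal (Real.exp_le_exp.2 ?_)⟩
    rw [Nat.sub_add_cancel hk1]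
    nlinarith
  have hdoob := lintegral_maximal_ineq hadapted (fun k s hs => (hmart k s hs).ge) c N
  rw [hmean, mul_comm] at hdoob
  calc μ {ω | ∃ k, 1 ≤ k ∧ k ≤ N ∧ b < logWalk X Y k ω}
      ≤ ENNReal.ofReal (Real.Gamma (α - t) / Real.Gamma (α + t)) / c :=
        (measure_mono hsub).trans
          ((ENNReal.le_div_iff_mul_le (.inl (by positivity)) (.inl ENNReal.ofReal_ne_top)).2 hdoob)
    _ = ENNReal.ofReal (Real.Gamma (α - t) / Real.Gamma (α + t) * Real.exp (-(2 * t * b))) := by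
        rw [← ENNReal.ofReal_div_of_pos (Real.exp_pos _), Real.exp_neg, div_eq_mul_inv]

end LogWalk

lemma exists_Gamma_sub_div_Gamma_add_le {α : ℝ} (hα : 0 < α) :
    ∃ C > 0, ∀ s ∈ Set.Icc 0 (α / 2), Real.Gamma (α - s) / Real.Gamma (α + s) ≤ C := by
  have hΓ : ∀ x : ℝ, 0 < x → ContinuousAt Real.Gamma x := fun x hx =>
    (Real.differentiableAt_Gamma fun m => by linarith [(m.cast_nonneg : (0 : ℝ) ≤ m)]).continuousAt
  have hcont :
      ContinuousOn (fun s => Real.Gamma (α - s) / Real.Gamma (α + s)) (Set.Icc 0 (α / 2)) :=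
    fun s ⟨hs0, hs⟩ => ContinuousAt.continuousWithinAt <|
      ((hΓ (α - s) (by linarith)).comp (f := fun s => α - s) (by fun_prop)).div
        ((hΓ (α + s) (by linarith)).comp (f := fun s => α + s) (by fun_prop))
        (Real.Gamma_pos_of_pos (by linarith)).ne'
  obtain ⟨C, hC⟩ := isCompact_Icc.bddAbove_image hcont
  exact ⟨max C 1, by positivity, fun s hs => (hC ⟨s, hs, rfl⟩).trans (le_max_left _ _)⟩

lemma eventually_div_rpow_one_third_mem_Ioc {σ t' ε : ℝ} (hσ : 0 < σ) (ht' : 0 < t') (hε : 0 < ε) :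
    ∀ᶠ N : ℕ in Filter.atTop, t' / (σ * N) ^ ((1 : ℝ) / 3) ∈ Set.Ioc 0 ε := by
  have hr : Filter.Tendsto (fun N : ℕ => (σ * N) ^ ((1 : ℝ) / 3)) Filter.atTop Filter.atTop :=
    (tendsto_rpow_atTop (by norm_num)).comp (tendsto_natCast_atTop_atTop.const_mul_atTop hσ)
  filter_upwards [hr.eventually_gt_atTop 0,
    (tendsto_const_nhds.div_atTop hr).eventually (ge_mem_nhds hε)] with N hN hN'
  exact ⟨div_pos ht' hN, hN'⟩

theorem randomWalk_max_exponential_bound_general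
    (α t' : ℝ) (hα : 0 < α) (ht' : 0 < t')
    (σ : ℝ) (hσ : 0 < σ) :
    ∃ C > (0 : ℝ), ∃ N₀ : ℕ, ∀ N : ℕ, N₀ ≤ N →
      ∀ (Ω : Type) (_ : MeasurableSpace Ω) (μ : Measure Ω) (_ : IsProbabilityMeasure μ)
        (X Y : ℕ → Ω → ℝ),
        (∀ i, Measurable (X i)) → (∀ i, Measurable (Y i)) →
        iIndepFun
          (fun p : ℕ × Bool => if p.2 then X p.1 else Y p.1) μ →
        (∀ i, Measure.map (X i) μ
            = invGammaMeasure (α + t' / (σ * N) ^ ((1 : ℝ) / 3))) →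
        (∀ i, Measure.map (Y i) μ
            = invGammaMeasure (α - t' / (σ * N) ^ ((1 : ℝ) / 3))) →
        ∀ a : ℝ, 0 < a →
          (μ {ω | ∃ k, 1 ≤ k ∧ k ≤ N ∧
              a * (σ * N) ^ ((1 : ℝ) / 3) <
                Real.log (X 1 ω)
                  + ∑ i ∈ Finset.Icc 2 k, (Real.log (X i ω) - Real.log (Y i ω))}).toReal
            ≤ C * Real.exp (-2 * t' * a) := by
  obtain ⟨C, hC, hCbound⟩ := exists_Gamma_sub_div_Gamma_add_le hα
  obtain ⟨N₀, hN₀⟩ :=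
    Filter.eventually_atTop.1 (eventually_div_rpow_one_third_mem_Ioc hσ ht' (half_pos hα))
  refine ⟨C, hC, N₀, fun N hN Ω _ μ _ X Y hX hY hind hXlaw hYlaw a _ => ?_⟩
  set r := (σ * N) ^ ((1 : ℝ) / 3)
  obtain ⟨ht, htα⟩ := hN₀ N hN
  have hr : 0 < r := (div_pos_iff_of_pos_left ht').1 ht
  have hexponent : 2 * (t' / r) * (a * r) = 2 * t' * a := by field_simp
  refine ENNReal.toReal_le_of_le_ofReal (by positivity)
    ((measure_exists_logWalk_gt_le ht (by linarith) hX hY hind hXlaw hYlaw (a * r) N).trans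
      (ENNReal.ofReal_le_ofReal ?_))
  rw [hexponent, neg_mul, neg_mul]
  gcongr
  exact hCbound _ ⟨ht.le, htα⟩

/-- Random walk estimate: with `t = t̃/(σN)^{1/3}`, `X_i ~ Gamma⁻¹(α+t)`,
`Y_i ~ Gamma⁻¹(α-t)` all independent, `S_k = log X₁ + Σ_{i=2}^k (log X_i - log Y_i)`,
there are `C > 0` and `N₀` with
`P(max_{1≤k≤N} S_k > a (σN)^{1/3}) ≤ C e^{-2 t̃ a}` for all `N ≥ N₀` and `a > 0`. -/
theorem randomWalk_max_exponential_bound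
    (α t' : ℝ) (hα : 0 < α) (ht' : 0 < t')
    (σ : ℝ) (hσdef : σ = -(iteratedDeriv 2 digamma α)) (hσ : 0 < σ) :
    ∃ C > (0 : ℝ), ∃ N₀ : ℕ, ∀ N : ℕ, N₀ ≤ N →
      ∀ (Ω : Type) (_ : MeasurableSpace Ω) (μ : Measure Ω) (_ : IsProbabilityMeasure μ)
        (X Y : ℕ → Ω → ℝ),
        (∀ i, Measurable (X i)) → (∀ i, Measurable (Y i)) →
        iIndepFun
          (fun p : ℕ × Bool => if p.2 then X p.1 else Y p.1) μ →
        (∀ i, Measure.map (X i) μ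
            = invGammaMeasure (α + t' / (σ * N) ^ ((1 : ℝ) / 3))) →
        (∀ i, Measure.map (Y i) μ
            = invGammaMeasure (α - t' / (σ * N) ^ ((1 : ℝ) / 3))) →
        ∀ a : ℝ, 0 < a →
          (μ {ω | ∃ k, 1 ≤ k ∧ k ≤ N ∧
              a * (σ * N) ^ ((1 : ℝ) / 3) <
                Real.log (X 1 ω)
                  + ∑ i ∈ Finset.Icc 2 k, (Real.log (X i ω) - Real.log (Y i ω))}).toReal
            ≤ C * Real.exp (-2 * t' * a) :=
  randomWalk_max_exponential_bound_general α t' hα ht' σ hσ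
end

section
/- Fix α > 0 and d ∈ (0, α). For the function h(z) = log Γ(α+z) - log Γ(α-z) - 2ψ(α)·z, the real part along the vertical line z = -d + iy satisfies d/dy Re h(-d+iy) = Σ_{n=0}^∞ [ -4d(n+α)y / ( ((n+α-d)² + y²)((n+α+d)² + y²) ) ]. In particular, y ↦ Re h(-d+iy) is strictly increasing for y < 0 and strictly decreasing for y > 0, so it attains its maximum at y = 0. -/
/-!
Since `Re log w = log |w|` and `Γ(w̄) = conj Γ(w)`, the real part of `h(-d + iy)` is
`log |Γ(α - d + iy)| - log |Γ(α + d + iy)| + 2ψ(α)d`. Letting `n → ∞` in Gauss's formula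
`Γ(x) = lim n^x n! / (x (x + 1) ⋯ (x + n))` gives, for `x > 0`,
`log |Γ(x)| - log |Γ(x + iy)| = Σ_j (log |x + j + iy| - log |x + j|)`,
so `Re h(-d + iy)` is, up to a constant, the series
`Σ_j [(log |j + α + d + iy| - log |j + α + d|) - (log |j + α - d + iy| - log |j + α - d|)]`.
Its terms have `y`-derivatives `y / ((j + α + d)² + y²) - y / ((j + α - d)² + y²)`, of the sign
of `-y` and bounded by `2d / (j + α - d)²` uniformly in `y` (each of the two halves alone has no
summable uniform bound), so the series can be differentiated termwise.
-/

open Complex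

open Filter Finset Topology

noncomputable def logNormShift (x y : ℝ) : ℝ := Real.log ‖(x : ℂ) + y * I‖ - Real.log ‖(x : ℂ)‖

@[simp]
lemma logNormShift_zero (x : ℝ) : logNormShift x 0 = 0 := by
  simp [logNormShift]

lemma hasDerivAt_logNormShift {x : ℝ} (hx : x ≠ 0) (y : ℝ) :
    HasDerivAt (logNormShift x) (y / (x ^ 2 + y ^ 2)) y := by
  have hpos : 0 < x ^ 2 + y ^ 2 := by positivity
  have hnorm : ∀ t : ℝ, Real.log ‖(x : ℂ) + t * I‖ = Real.log (x ^ 2 + t ^ 2) / 2 := by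
    intro t
    rw [Complex.norm_add_mul_I, Real.log_sqrt (by positivity)]
  have hfun : logNormShift x = fun t => Real.log (x ^ 2 + t ^ 2) / 2 - Real.log ‖(x : ℂ)‖ := by
    funext t; rw [logNormShift, hnorm]
  have hsq : HasDerivAt (fun t : ℝ => x ^ 2 + t ^ 2) (2 * y) y := by
    simpa using (hasDerivAt_pow 2 y).const_add (x ^ 2)
  rw [hfun]
  refine (((hsq.log hpos.ne').div_const 2).sub_const _).congr_deriv ?_
  field_simp

lemma abs_div_sq_add_sq_sub_div_le {a b : ℝ} (ha : 0 < a) (hab : a ≤ b) (y : ℝ) :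
    |y / (b ^ 2 + y ^ 2) - y / (a ^ 2 + y ^ 2)| ≤ (b - a) / a ^ 2 := by
  have hA : 0 < a ^ 2 + y ^ 2 := by nlinarith [sq_nonneg y]
  have hB : 0 < b ^ 2 + y ^ 2 := by nlinarith [sq_nonneg y]
  have hcombine : y / (b ^ 2 + y ^ 2) - y / (a ^ 2 + y ^ 2) =
      -((b ^ 2 - a ^ 2) * y / ((a ^ 2 + y ^ 2) * (b ^ 2 + y ^ 2))) := by
    field_simp; ring
  rw [hcombine, abs_neg, abs_div, abs_mul, abs_of_nonneg (by nlinarith : 0 ≤ b ^ 2 - a ^ 2),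
    abs_of_pos (mul_pos hA hB), div_le_div_iff₀ (mul_pos hA hB) (pow_pos ha 2)]
  have h1 : 2 * a * |y| ≤ a ^ 2 + y ^ 2 := by
    nlinarith [sq_nonneg (|y| - a), sq_abs y]
  have h2 : (b + a) * a ≤ 2 * (b ^ 2 + y ^ 2) := by nlinarith [sq_nonneg y]
  calc (b ^ 2 - a ^ 2) * |y| * a ^ 2 = (b - a) * ((2 * a * |y|) * ((b + a) * a)) / 2 := by ring
    _ ≤ (b - a) * ((a ^ 2 + y ^ 2) * (2 * (b ^ 2 + y ^ 2))) / 2 := by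
        have hprod := mul_le_mul h1 h2 (by nlinarith) hA.le
        have hba : 0 ≤ b - a := by linarith
        gcongr
    _ = (b - a) * ((a ^ 2 + y ^ 2) * (b ^ 2 + y ^ 2)) := by ring

lemma div_sq_add_sq_sub_div_pos {a b y : ℝ} (ha : 0 < a) (hab : a < b) (hy : y < 0) :
    0 < y / (b ^ 2 + y ^ 2) - y / (a ^ 2 + y ^ 2) := by
  have hA : 0 < a ^ 2 + y ^ 2 := by nlinarith [sq_nonneg y]
  have hlt : a ^ 2 + y ^ 2 < b ^ 2 + y ^ 2 := by nlinarith
  rw [sub_pos, div_lt_div_iff₀ hA (hA.trans hlt)]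
  nlinarith

lemma neg_four_mul_div_eq_div_sub_div (x d y : ℝ) :
    -4 * d * x * y / (((x - d) ^ 2 + y ^ 2) * ((x + d) ^ 2 + y ^ 2)) =
      y / ((x + d) ^ 2 + y ^ 2) - y / ((x - d) ^ 2 + y ^ 2) := by
  rcases eq_or_ne y 0 with rfl | hy
  · simp
  have hA : 0 < (x - d) ^ 2 + y ^ 2 := by positivity
  have hB : 0 < (x + d) ^ 2 + y ^ 2 := by positivity
  field_simp
  ring

lemma log_norm_GammaSeq {z : ℂ} (hz : 0 < z.re) {n : ℕ} (hn : n ≠ 0) :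
    Real.log ‖GammaSeq z n‖ =
      z.re * Real.log n + Real.log n.factorial - ∑ j ∈ range (n + 1), Real.log ‖z + j‖ := by
  have hshift : ∀ j : ℕ, ‖z + j‖ ≠ 0 := fun j => by
    rw [norm_ne_zero_iff]
    intro h
    have := congrArg re h
    simp only [add_re, natCast_re, zero_re] at this
    linarith [(Nat.cast_nonneg j : (0 : ℝ) ≤ j)]
  have hpow : ‖(n : ℂ) ^ z‖ = (n : ℝ) ^ z.re := norm_natCast_cpow_of_pos (Nat.pos_of_ne_zero hn) z
  have hn' : (0 : ℝ) < n := Nat.cast_pos.2 (Nat.pos_of_ne_zero hn)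
  rw [GammaSeq, norm_div, norm_mul, norm_prod, hpow, Complex.norm_natCast,
    Real.log_div (by positivity) (prod_ne_zero_iff.2 fun j _ => hshift j),
    Real.log_mul (by positivity) (by positivity), Real.log_rpow hn',
    Real.log_prod fun j _ => hshift j]

lemma tendsto_sum_logNormShift {x : ℝ} (hx : 0 < x) (y : ℝ) :
    Tendsto (fun n => ∑ j ∈ range n, logNormShift (j + x) y) atTop
      (𝓝 (Real.log ‖Gamma x‖ - Real.log ‖Gamma (x + y * I)‖)) := by
  have hre : (0 : ℝ) < ((x : ℂ) + y * I).re := by simpa using hx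
  have hlim := ((GammaSeq_tendsto_Gamma x).norm.log
      (norm_ne_zero_iff.2 (Gamma_ne_zero_of_re_pos (by simpa using hx)))).sub
    ((GammaSeq_tendsto_Gamma ((x : ℂ) + y * I)).norm.log
      (norm_ne_zero_iff.2 (Gamma_ne_zero_of_re_pos hre)))
  have hterm : ∀ j : ℕ,
      logNormShift (j + x) y = Real.log ‖(x + y * I : ℂ) + j‖ - Real.log ‖(x : ℂ) + j‖ := by
    intro j
    simp only [logNormShift]
    push_cast
    ring_nf
  rw [← tendsto_add_atTop_iff_nat 1]
  refine hlim.congr' ?_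
  filter_upwards [eventually_ne_atTop 0] with n hn
  rw [log_norm_GammaSeq (by simpa using hx) hn, log_norm_GammaSeq hre hn,
    sum_congr rfl fun j _ => hterm j, sum_sub_distrib]
  simp only [add_re, ofReal_re, mul_re, I_re, I_im, ofReal_im]
  ring

section Series

variable {p q : ℝ}

lemma summable_div_natCast_add_sq (c : ℝ) (hp : 0 < p) :
    Summable fun j : ℕ => c / ((j : ℝ) + p) ^ 2 := by
  have h := (Real.summable_one_div_nat_add_rpow p 2).2 one_lt_two
  refine (h.mul_left c).congr fun j => ?_
  have hj : 0 < (j : ℝ) + p := by positivity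
  rw [abs_of_pos hj, Real.rpow_two, mul_one_div]

lemma abs_div_sq_add_sq_sub_div_natCast_add_le (hp : 0 < p) (hpq : p ≤ q) (j : ℕ) (y : ℝ) :
    |y / (((j : ℝ) + q) ^ 2 + y ^ 2) - y / (((j : ℝ) + p) ^ 2 + y ^ 2)| ≤
      (q - p) / ((j : ℝ) + p) ^ 2 := by
  have h := abs_div_sq_add_sq_sub_div_le (a := (j : ℝ) + p) (b := j + q) (by positivity)
    (by linarith) y
  rwa [add_sub_add_left_eq_sub] at h

lemma summable_div_sq_add_sq_sub_div (hp : 0 < p) (hpq : p ≤ q) (y : ℝ) :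
    Summable fun j : ℕ => y / (((j : ℝ) + q) ^ 2 + y ^ 2) - y / (((j : ℝ) + p) ^ 2 + y ^ 2) :=
  (summable_div_natCast_add_sq (q - p) hp).of_norm_bounded
    fun j => abs_div_sq_add_sq_sub_div_natCast_add_le hp hpq j y

lemma hasDerivAt_logNormShift_sub (hp : 0 < p) (hpq : p ≤ q) (j : ℕ) (y : ℝ) :
    HasDerivAt (fun y => logNormShift (j + q) y - logNormShift (j + p) y)
      (y / (((j : ℝ) + q) ^ 2 + y ^ 2) - y / (((j : ℝ) + p) ^ 2 + y ^ 2)) y :=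
  have hq : 0 < q := hp.trans_le hpq
  (hasDerivAt_logNormShift (by positivity) y).sub (hasDerivAt_logNormShift (by positivity) y)

lemma summable_logNormShift_sub (hp : 0 < p) (hpq : p ≤ q) (y : ℝ) :
    Summable fun j : ℕ => logNormShift (j + q) y - logNormShift (j + p) y :=
  summable_of_summable_hasDerivAt (y₀ := 0) (summable_div_natCast_add_sq (q - p) hp)
    (hasDerivAt_logNormShift_sub hp hpq) (abs_div_sq_add_sq_sub_div_natCast_add_le hp hpq)
    (by simp) y

lemma hasDerivAt_tsum_logNormShift_sub (hp : 0 < p) (hpq : p ≤ q) (y : ℝ) :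
    HasDerivAt (fun y => ∑' j : ℕ, (logNormShift (j + q) y - logNormShift (j + p) y))
      (∑' j : ℕ, (y / (((j : ℝ) + q) ^ 2 + y ^ 2) - y / (((j : ℝ) + p) ^ 2 + y ^ 2))) y :=
  hasDerivAt_tsum (y₀ := 0) (summable_div_natCast_add_sq (q - p) hp)
    (hasDerivAt_logNormShift_sub hp hpq) (abs_div_sq_add_sq_sub_div_natCast_add_le hp hpq)
    (by simp) y

lemma hasSum_logNormShift_sub (hp : 0 < p) (hpq : p ≤ q) (y : ℝ) :
    HasSum (fun j : ℕ => logNormShift (j + q) y - logNormShift (j + p) y)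
      ((Real.log ‖Gamma q‖ - Real.log ‖Gamma (q + y * I)‖) -
        (Real.log ‖Gamma p‖ - Real.log ‖Gamma (p + y * I)‖)) := by
  rw [(summable_logNormShift_sub hp hpq y).hasSum_iff_tendsto_nat]
  simpa only [sum_sub_distrib] using
    (tendsto_sum_logNormShift (hp.trans_le hpq) y).sub (tendsto_sum_logNormShift hp y)

lemma tsum_div_sq_add_sq_sub_div_pos (hp : 0 < p) (hpq : p < q) {y : ℝ} (hy : y < 0) :
    0 < ∑' j : ℕ, (y / (((j : ℝ) + q) ^ 2 + y ^ 2) - y / (((j : ℝ) + p) ^ 2 + y ^ 2)) := by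
  have hterm : ∀ j : ℕ, 0 < y / (((j : ℝ) + q) ^ 2 + y ^ 2) - y / (((j : ℝ) + p) ^ 2 + y ^ 2) :=
    fun j => div_sq_add_sq_sub_div_pos (by positivity) (by linarith) hy
  exact (summable_div_sq_add_sq_sub_div hp hpq.le y).tsum_pos (fun j => (hterm j).le) 0 (hterm 0)

lemma tsum_div_sq_add_sq_sub_div_neg (hp : 0 < p) (hpq : p < q) {y : ℝ} (hy : 0 < y) :
    ∑' j : ℕ, (y / (((j : ℝ) + q) ^ 2 + y ^ 2) - y / (((j : ℝ) + p) ^ 2 + y ^ 2)) < 0 := by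
  have h := tsum_div_sq_add_sq_sub_div_pos hp hpq (neg_lt_zero.2 hy)
  simp only [neg_sq, neg_div, sub_neg_eq_add, neg_add_eq_sub] at h
  rw [← neg_pos, ← tsum_neg]
  simpa only [neg_sub] using h

end Series

lemma strictMonoOn_Iic_strictAntiOn_Ici_of_hasDerivAt {f f' : ℝ → ℝ} {c : ℝ}
    (hf : ∀ y, HasDerivAt f (f' y) y) (hpos : ∀ y < c, 0 < f' y) (hneg : ∀ y, c < y → f' y < 0) :
    StrictMonoOn f (Set.Iic c) ∧ StrictAntiOn f (Set.Ici c) ∧ ∀ y, f y ≤ f c := by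
  have hcont : Continuous f := continuous_iff_continuousAt.2 fun y => (hf y).continuousAt
  have hmono : StrictMonoOn f (Set.Iic c) :=
    strictMonoOn_of_hasDerivWithinAt_pos (convex_Iic c) hcont.continuousOn
      (fun y _ => (hf y).hasDerivWithinAt) fun y hy => hpos y (by simpa using hy)
  have hanti : StrictAntiOn f (Set.Ici c) :=
    strictAntiOn_of_hasDerivWithinAt_neg (convex_Ici c) hcont.continuousOn
      (fun y _ => (hf y).hasDerivWithinAt) fun y hy => hneg y (by simpa using hy)
  refine ⟨hmono, hanti, fun y => ?_⟩
  rcases le_total y c with hy | hy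
  · exact hmono.monotoneOn hy Set.self_mem_Iic hy
  · exact hanti.antitoneOn Set.self_mem_Ici hy hy

lemma re_log_Gamma_sub_log_Gamma (α d ψ y : ℝ) :
    (Complex.log (Gamma (α + (-d + y * I))) - Complex.log (Gamma (α - (-d + y * I)))
        - 2 * ψ * (-d + y * I)).re =
      Real.log ‖Gamma ((α - d : ℝ) + y * I)‖ - Real.log ‖Gamma ((α + d : ℝ) + y * I)‖
        + 2 * ψ * d := by
  have hplus : (α : ℂ) + (-d + y * I) = (α - d : ℝ) + y * I := by push_cast; ring
  have hminus : (α : ℂ) - (-d + y * I) = starRingEnd ℂ ((α + d : ℝ) + y * I) := by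
    rw [map_add, map_mul, conj_ofReal, conj_ofReal, conj_I]; push_cast; ring
  rw [sub_re, sub_re, log_re, log_re, hplus, hminus, Gamma_conj, norm_conj]
  simp

theorem re_h_on_vertical_line_general (α d : ℝ) (hd0 : 0 < d) (hdα : d < α) :
    (∀ y : ℝ,
      HasDerivAt
        (fun y : ℝ =>
          (Complex.log (Complex.Gamma (↑α + (-↑d + ↑y * Complex.I)))
            - Complex.log (Complex.Gamma (↑α - (-↑d + ↑y * Complex.I)))
            - 2 * ↑(_root_.digamma α) * (-↑d + ↑y * Complex.I)).re)
        (∑' n : ℕ, -4 * d * ((n : ℝ) + α) * y /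
          ((((n : ℝ) + α - d) ^ 2 + y ^ 2) * (((n : ℝ) + α + d) ^ 2 + y ^ 2))) y) ∧
    StrictMonoOn
      (fun y : ℝ =>
        (Complex.log (Complex.Gamma (↑α + (-↑d + ↑y * Complex.I)))
          - Complex.log (Complex.Gamma (↑α - (-↑d + ↑y * Complex.I)))
          - 2 * ↑(_root_.digamma α) * (-↑d + ↑y * Complex.I)).re) (Set.Iic 0) ∧
    StrictAntiOn
      (fun y : ℝ =>
        (Complex.log (Complex.Gamma (↑α + (-↑d + ↑y * Complex.I)))
          - Complex.log (Complex.Gamma (↑α - (-↑d + ↑y * Complex.I)))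
          - 2 * ↑(_root_.digamma α) * (-↑d + ↑y * Complex.I)).re) (Set.Ici 0) ∧
    ∀ y : ℝ,
      (Complex.log (Complex.Gamma (↑α + (-↑d + ↑y * Complex.I)))
        - Complex.log (Complex.Gamma (↑α - (-↑d + ↑y * Complex.I)))
        - 2 * ↑(_root_.digamma α) * (-↑d + ↑y * Complex.I)).re
      ≤ (Complex.log (Complex.Gamma (↑α + (-↑d + (0 : ℝ) * Complex.I)))
        - Complex.log (Complex.Gamma (↑α - (-↑d + (0 : ℝ) * Complex.I)))
        - 2 * ↑(_root_.digamma α) * (-↑d + (0 : ℝ) * Complex.I)).re := by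
  set F : ℝ → ℝ := fun y => (Complex.log (Gamma (α + (-d + y * I)))
    - Complex.log (Gamma (α - (-d + y * I))) - 2 * _root_.digamma α * (-d + y * I)).re
  have hp : 0 < α - d := sub_pos.2 hdα
  have hpq : α - d < α + d := by linarith
  have hseries : F = fun y =>
      (∑' j : ℕ, (logNormShift (j + (α + d)) y - logNormShift (j + (α - d)) y)) +
        (Real.log ‖Gamma (α - d : ℝ)‖ - Real.log ‖Gamma (α + d : ℝ)‖ +
          2 * _root_.digamma α * d) := by
    funext y
    dsimp only [F]
    rw [re_log_Gamma_sub_log_Gamma, (hasSum_logNormShift_sub hp hpq.le y).tsum_eq]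
    ring
  have hterm : ∀ (y : ℝ) (n : ℕ), -4 * d * ((n : ℝ) + α) * y /
      ((((n : ℝ) + α - d) ^ 2 + y ^ 2) * (((n : ℝ) + α + d) ^ 2 + y ^ 2)) =
      y / (((n : ℝ) + (α + d)) ^ 2 + y ^ 2) - y / (((n : ℝ) + (α - d)) ^ 2 + y ^ 2) :=
    fun y n => by rw [neg_four_mul_div_eq_div_sub_div, add_assoc, add_sub_assoc]
  have hderiv : ∀ y : ℝ, HasDerivAt F (∑' n : ℕ, -4 * d * ((n : ℝ) + α) * y /
      ((((n : ℝ) + α - d) ^ 2 + y ^ 2) * (((n : ℝ) + α + d) ^ 2 + y ^ 2))) y := fun y => by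
    simp only [hterm, hseries]
    exact (hasDerivAt_tsum_logNormShift_sub hp hpq.le y).add_const _
  obtain ⟨hmono, hanti, hmax⟩ := strictMonoOn_Iic_strictAntiOn_Ici_of_hasDerivAt hderiv
    (fun y hy => by simpa only [hterm] using tsum_div_sq_add_sq_sub_div_pos hp hpq hy)
    (fun y hy => by simpa only [hterm] using tsum_div_sq_add_sq_sub_div_neg hp hpq hy)
  exact ⟨hderiv, hmono, hanti, hmax⟩

/-- For `h(z) = log Γ(α+z) - log Γ(α-z) - 2ψ(α) z` and `0 < d < α`, the real part along
the vertical line `z = -d + iy` satisfies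
`d/dy Re h(-d+iy) = Σ_{n≥0} -4d(n+α)y / (((n+α-d)² + y²)((n+α+d)² + y²))`;
in particular `y ↦ Re h(-d+iy)` is strictly increasing on `y ≤ 0`, strictly decreasing
on `y ≥ 0`, and attains its maximum at `y = 0`. -/
theorem re_h_on_vertical_line (α d : ℝ) (hα : 0 < α) (hd0 : 0 < d) (hdα : d < α) :
    (∀ y : ℝ,
      HasDerivAt
        (fun y : ℝ =>
          (Complex.log (Complex.Gamma (↑α + (-↑d + ↑y * Complex.I)))
            - Complex.log (Complex.Gamma (↑α - (-↑d + ↑y * Complex.I)))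
            - 2 * ↑(_root_.digamma α) * (-↑d + ↑y * Complex.I)).re)
        (∑' n : ℕ, -4 * d * ((n : ℝ) + α) * y /
          ((((n : ℝ) + α - d) ^ 2 + y ^ 2) * (((n : ℝ) + α + d) ^ 2 + y ^ 2))) y) ∧
    StrictMonoOn
      (fun y : ℝ =>
        (Complex.log (Complex.Gamma (↑α + (-↑d + ↑y * Complex.I)))
          - Complex.log (Complex.Gamma (↑α - (-↑d + ↑y * Complex.I)))
          - 2 * ↑(_root_.digamma α) * (-↑d + ↑y * Complex.I)).re) (Set.Iic 0) ∧
    StrictAntiOn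
      (fun y : ℝ =>
        (Complex.log (Complex.Gamma (↑α + (-↑d + ↑y * Complex.I)))
          - Complex.log (Complex.Gamma (↑α - (-↑d + ↑y * Complex.I)))
          - 2 * ↑(_root_.digamma α) * (-↑d + ↑y * Complex.I)).re) (Set.Ici 0) ∧
    ∀ y : ℝ,
      (Complex.log (Complex.Gamma (↑α + (-↑d + ↑y * Complex.I)))
        - Complex.log (Complex.Gamma (↑α - (-↑d + ↑y * Complex.I)))
        - 2 * ↑(_root_.digamma α) * (-↑d + ↑y * Complex.I)).re
      ≤ (Complex.log (Complex.Gamma (↑α + (-↑d + (0 : ℝ) * Complex.I)))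
        - Complex.log (Complex.Gamma (↑α - (-↑d + (0 : ℝ) * Complex.I)))
        - 2 * ↑(_root_.digamma α) * (-↑d + (0 : ℝ) * Complex.I)).re :=
  re_h_on_vertical_line_general α d hd0 hdα
end

section
/- For real v, w and d ∈ (0, 1/2), with Z = -d + iv and W = -d + iw, there exists a constant C > 0 (depending only on d) such that |sin(π(Z-W)) / sin(π(Z+W))| ≤ C · e^{π|v-w| - π|v+w|}. -/
/-!
Since `|sin(x + iy)|² = sin² x + sinh² y`, `|sin(x + iy)|` is at most `cosh y ≤ e^{|y|}`, and, as
long as `x` stays a fixed distance away from `πℤ`, it is at least a constant times `e^{|y|}`.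
Here `π(Z - W) = iπ(v - w)` and `π(Z + W) = -2πd + iπ(v + w)` with `0 < 2πd < π`.
-/

open Complex Real

theorem Real.cosh_le_exp_abs (x : ℝ) : Real.cosh x ≤ Real.exp |x| := by
  rw [← Real.cosh_abs, Real.cosh_eq]
  linarith [Real.exp_le_exp.mpr (show -|x| ≤ |x| by linarith [abs_nonneg x])]

theorem Real.exp_abs_sub_one_le_two_mul_abs_sinh (x : ℝ) :
    Real.exp |x| - 1 ≤ 2 * |Real.sinh x| := by
  rw [Real.abs_sinh, Real.sinh_eq]
  linarith [Real.exp_le_one_iff.mpr (neg_nonpos.mpr (abs_nonneg x))]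

namespace Complex

theorem sq_norm_sin (z : ℂ) : ‖sin z‖ ^ 2 = Real.sin z.re ^ 2 + Real.sinh z.im ^ 2 := by
  rw [sin_eq, Complex.sq_norm, ← ofReal_sin, ← ofReal_cosh, ← ofReal_cos, ← ofReal_sinh,
    ← ofReal_mul, ← ofReal_mul, normSq_add_mul_I]
  linear_combination Real.sin z.re ^ 2 * Real.cosh_sq z.im
    + Real.sinh z.im ^ 2 * Real.sin_sq_add_cos_sq z.re

theorem norm_sin_le_cosh_im (z : ℂ) : ‖sin z‖ ≤ Real.cosh z.im := by
  rw [← sq_le_sq₀ (norm_nonneg _) (Real.cosh_pos _).le, sq_norm_sin, Real.cosh_sq]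
  linarith [Real.sin_sq_le_one z.re]

theorem norm_sin_le_exp_abs_im (z : ℂ) : ‖sin z‖ ≤ Real.exp |z.im| :=
  (norm_sin_le_cosh_im z).trans (Real.cosh_le_exp_abs z.im)

theorem abs_sin_re_le_norm_sin (z : ℂ) : |Real.sin z.re| ≤ ‖sin z‖ := by
  rw [← abs_norm, ← sq_le_sq, sq_norm_sin]
  nlinarith [sq_nonneg (Real.sinh z.im)]

theorem abs_sinh_im_le_norm_sin (z : ℂ) : |Real.sinh z.im| ≤ ‖sin z‖ := by
  rw [← abs_norm (sin z), ← sq_le_sq, sq_norm_sin]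
  nlinarith [sq_nonneg (Real.sin z.re)]

theorem mul_exp_abs_im_le_norm_sin {z : ℂ} {m : ℝ} (hm1 : m ≤ 1)
    (hm : m ≤ |Real.sin z.re|) : m / 3 * Real.exp |z.im| ≤ ‖sin z‖ := by
  have hre := hm.trans (abs_sin_re_le_norm_sin z)
  have him := (Real.exp_abs_sub_one_le_two_mul_abs_sinh z.im).trans
    (mul_le_mul_of_nonneg_left (abs_sinh_im_le_norm_sin z) zero_le_two)
  -- `m e^{|y|} = m (e^{|y|} - 1) + m ≤ 2 ‖sin z‖ + ‖sin z‖`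
  nlinarith [mul_le_mul_of_nonneg_right hm1 (sub_nonneg.mpr (Real.one_le_exp (abs_nonneg z.im)))]

end Complex

/-- For `Z = -d + iv`, `W = -d + iw` with `0 < d < 1/2`, there is `C > 0` with
`|sin(π(Z-W)) / sin(π(Z+W))| ≤ C e^{π|v-w| - π|v+w|}` for all real `v, w`. -/
theorem sin_ratio_bound (d : ℝ) (hd0 : 0 < d) (hd : d < 1 / 2) :
    ∃ C > (0 : ℝ), ∀ v w : ℝ,
      ‖Complex.sin (↑Real.pi * ((-↑d + ↑v * Complex.I) - (-↑d + ↑w * Complex.I)))‖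
        / ‖Complex.sin (↑Real.pi * ((-↑d + ↑v * Complex.I) + (-↑d + ↑w * Complex.I)))‖
      ≤ C * Real.exp (Real.pi * |v - w| - Real.pi * |v + w|) := by
  have hsin : 0 < Real.sin (2 * π * d) :=
    Real.sin_pos_of_pos_of_lt_pi (by positivity) (by nlinarith [Real.pi_pos])
  set m := min (Real.sin (2 * π * d)) 1
  have hm : 0 < m := lt_min hsin one_pos
  refine ⟨3 / m, by positivity, fun v w => ?_⟩
  set Z : ℂ := -↑d + ↑v * I
  set W : ℂ := -↑d + ↑w * I
  have hdiff_im : (↑π * (Z - W)).im = π * (v - w) := by simp [Z, W]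
  have hsum_re : (↑π * (Z + W)).re = -(2 * π * d) := by simp [Z, W]; ring
  have hsum_im : (↑π * (Z + W)).im = π * (v + w) := by simp [Z, W]
  have hnum := norm_sin_le_exp_abs_im (↑π * (Z - W))
  have hden := mul_exp_abs_im_le_norm_sin (z := ↑π * (Z + W)) (min_le_right _ _)
    (by rw [hsum_re, Real.sin_neg, abs_neg, abs_of_pos hsin]; exact min_le_left _ _)
  rw [hdiff_im, abs_mul, abs_of_pos Real.pi_pos] at hnum
  rw [hsum_im, abs_mul, abs_of_pos Real.pi_pos] at hden
  calc _ ≤ Real.exp (π * |v - w|) / (m / 3 * Real.exp (π * |v + w|)) :=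
        div_le_div₀ (Real.exp_nonneg _) hnum (by positivity) hden
    _ = 3 / m * Real.exp (π * |v - w| - π * |v + w|) := by
        rw [Real.exp_sub]; field_simp
end

section
/- Let F_N : ℝ → [0,1] be CDFs of random variables 𝒳_N, and suppose: (i) the family (𝒳_N) is tight, (ii) there are constants C, λ > 0 with F_N(z) ≤ C·e^{λz} for all z < 0 and all large N, and (iii) for some A ∈ (0, λ) and some continuous function Φ : ℝ → ℝ, for every y ∈ ℝ, ∫_ℝ F_N(z+r)·e^{−Az}·e^{izy} dz converges as N → ∞ to ∫_ℝ Φ(z)·e^{−Az}·e^{izy} dz for all r, where Φ(·+r)e^{−A·} ∈ L²(ℝ). Then every subsequential weak limit of (𝒳_N) has CDF equal (at continuity points) to Φ, and hence 𝒳_N converges weakly to the law with CDF Φ. -/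
/-!
Along any subsequence, tightness and Prokhorov's theorem give a further subsequence converging
weakly to some probability measure `ν`, so its CDFs converge to `cdf ν` at every continuity point,
hence almost everywhere. The tail bound dominates `F_N(z) e^{-Az}` by `max C 1 · e^{-c|z|}` with
`c = min A (λ - A)`, so by dominated convergence the damped Fourier transform of `cdf ν` is the
limit of those of the `F_N`, i.e. that of `Φ`. Fourier inversion then gives `cdf ν = Φ` at the
continuity points of `cdf ν`, a dense set, and right-continuity of `cdf ν` together with continuity
of `Φ` extends this to all of `ℝ`. Since every subsequence has a further subsequence along which
`F_N → Φ` pointwise, the whole sequence converges.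
-/

open MeasureTheory Filter Complex

open Set Topology ProbabilityTheory
open scoped FourierTransform

lemma MeasureTheory.ProbabilityMeasure.exists_subseq_tendsto_of_isTightMeasureSet {E : Type*}
    [TopologicalSpace E] [TopologicalSpace.MetrizableSpace E] [TopologicalSpace.SeparableSpace E]
    [MeasurableSpace E] [BorelSpace E] {P : ℕ → ProbabilityMeasure E}
    (hP : IsTightMeasureSet (range fun n => (P n : Measure E))) :
    ∃ ν : ProbabilityMeasure E, ∃ φ : ℕ → ℕ, StrictMono φ ∧ Tendsto (P ∘ φ) atTop (𝓝 ν) := by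
  have hcomp := isCompact_closure_of_isTightMeasureSet (S := range P) (by
    convert hP using 1; ext; simp)
  obtain ⟨ν, -, φ, hφ, hlim⟩ := hcomp.tendsto_subseq fun n => subset_closure (mem_range_self n)
  exact ⟨ν, φ, hφ, hlim⟩

lemma isTightMeasureSet_range_of_measureReal_compl_Icc_le {ι : Type*} {μ : ι → Measure ℝ}
    [∀ i, IsFiniteMeasure (μ i)]
    (h : ∀ ε > (0 : ℝ), ∃ M : ℝ, ∀ i, (μ i).real (Icc (-M) M)ᶜ ≤ ε) :
    IsTightMeasureSet (range μ) := by
  refine isTightMeasureSet_iff_exists_isCompact_measure_compl_le.2 fun ε hε => ?_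
  have hε' : min ε 1 ≠ ⊤ := (min_le_right ε 1).trans_lt ENNReal.one_lt_top |>.ne
  obtain ⟨M, hM⟩ := h (min ε 1).toReal (ENNReal.toReal_pos (by positivity) hε')
  refine ⟨Icc (-M) M, isCompact_Icc, ?_⟩
  rintro _ ⟨i, rfl⟩
  calc μ i (Icc (-M) M)ᶜ = ENNReal.ofReal ((μ i).real (Icc (-M) M)ᶜ) :=
        (ENNReal.ofReal_toReal (measure_ne_top _ _)).symm
    _ ≤ ENNReal.ofReal (min ε 1).toReal := ENNReal.ofReal_le_ofReal (hM i)
    _ = min ε 1 := ENNReal.ofReal_toReal hε'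
    _ ≤ ε := min_le_left _ _

lemma MeasureTheory.ProbabilityMeasure.tendsto_cdf_of_tendsto {ι : Type*} {L : Filter ι}
    {P : ι → ProbabilityMeasure ℝ} {ν : ProbabilityMeasure ℝ} (hP : Tendsto P L (𝓝 ν)) {x : ℝ}
    (hx : ContinuousAt (cdf ν) x) : Tendsto (fun i => cdf (P i) x) L (𝓝 (cdf ν x)) := by
  have hatom : (ν : Measure ℝ) {x} = 0 := by
    rw [← measure_cdf (ν : Measure ℝ), StieltjesFunction.measure_singleton,
      hx.continuousWithinAt.leftLim_eq, sub_self, ENNReal.ofReal_zero]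
  have := ProbabilityMeasure.tendsto_measure_of_null_frontier_of_tendsto' hP
    (E := Iic x) (by rwa [frontier_Iic])
  simp_rw [cdf_eq_real]
  exact (ENNReal.tendsto_toReal (measure_ne_top _ _)).comp this

lemma eq_of_continuousWithinAt_Ioi_of_eqOn_dense {α β : Type*} [TopologicalSpace α]
    [LinearOrder α] [OrderTopology α] [DenselyOrdered α] [NoMaxOrder α]
    [TopologicalSpace β] [T2Space β] {f g : α → β} {s : Set α} (hs : Dense s)
    (hfg : EqOn f g s) {x : α} (hf : ContinuousWithinAt f (Ioi x) x)
    (hg : ContinuousWithinAt g (Ioi x) x) : f x = g x := by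
  have hx : x ∈ closure (Ioi x ∩ s) := by
    rw [← closure_closure (s := Ioi x ∩ s)]
    exact closure_mono (hs.open_subset_closure_inter isOpen_Ioi) (by simp)
  have := mem_closure_iff_nhdsWithin_neBot.1 hx
  refine tendsto_nhds_unique (hf.mono (s := Ioi x ∩ s) inter_subset_left) ?_
  exact (hg.mono inter_subset_left).congr'
    (eventually_nhdsWithin_of_forall fun y hy => (hfg hy.2).symm)

lemma norm_cexp_I_mul_ofReal_mul_ofReal (t y : ℝ) : ‖Complex.exp (I * t * y)‖ = 1 := by
  rw [mul_assoc, ← ofReal_mul, mul_comm, norm_exp_ofReal_mul_I]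

lemma MeasureTheory.Integrable.mul_cexp_I_mul {f : ℝ → ℂ} (hf : Integrable f) (y : ℝ) :
    Integrable fun t : ℝ => f t * Complex.exp (I * t * y) :=
  hf.mul_bdd (c := 1) (by fun_prop)
    (ae_of_all _ fun t => (norm_cexp_I_mul_ofReal_mul_ofReal t y).le)

lemma fourier_eq_integral_mul_cexp (f : ℝ → ℂ) (w : ℝ) :
    𝓕 f w = ∫ t : ℝ, f t * Complex.exp (I * t * (-2 * Real.pi * w : ℝ)) := by
  rw [Real.fourier_eq']
  congr 1 with t
  rw [smul_eq_mul, mul_comm]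
  congr 2
  push_cast
  simp only [RCLike.inner_apply, conj_trivial, ofReal_mul]
  ring

lemma eq_of_integral_mul_cexp_eq {f g : ℝ → ℂ} (hf : Integrable f) (hg : Integrable g)
    (hfg : ∀ y : ℝ,
      ∫ t : ℝ, f t * Complex.exp (I * t * y) = ∫ t : ℝ, g t * Complex.exp (I * t * y))
    {v : ℝ} (hfv : ContinuousAt f v) (hgv : ContinuousAt g v) : f v = g v := by
  have hfourier : 𝓕 (f - g) = 0 := funext fun w => by
    simp only [fourier_eq_integral_mul_cexp, Pi.sub_apply, sub_mul, Pi.zero_apply]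
    rw [integral_sub (hf.mul_cexp_I_mul _) (hg.mul_cexp_I_mul _), hfg, sub_self]
  have hinv := (hf.sub hg).fourierInv_fourier_eq (by rw [hfourier]; exact integrable_zero _ _ _)
    (hfv.sub hgv)
  rw [hfourier] at hinv
  simpa [Real.fourierInv_eq, sub_eq_zero, eq_comm] using hinv

lemma integrable_exp_neg_mul_abs {c : ℝ} (hc : 0 < c) :
    Integrable fun t : ℝ => Real.exp (-c * |t|) := by
  rw [← integrableOn_univ, ← Iic_union_Ioi (a := (0 : ℝ)), integrableOn_union]
  constructor
  · refine (integrableOn_exp_mul_Iic hc 0).congr_fun (fun t ht => ?_) measurableSet_Iic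
    rw [abs_of_nonpos ht, neg_mul_neg]
  · refine (integrableOn_exp_mul_Ioi (neg_neg_of_pos hc) 0).congr_fun (fun t ht => ?_)
      measurableSet_Ioi
    rw [abs_of_pos ht]

lemma abs_mul_exp_neg_le {C lam A t x : ℝ} (hx0 : 0 ≤ x) (hx1 : x ≤ 1)
    (htail : t < 0 → x ≤ C * Real.exp (lam * t)) :
    |x * Real.exp (-A * t)| ≤ max C 1 * Real.exp (-min A (lam - A) * |t|) := by
  rw [abs_of_nonneg (by positivity)]
  rcases lt_or_ge t 0 with ht | ht
  · calc x * Real.exp (-A * t) ≤ C * Real.exp (lam * t) * Real.exp (-A * t) :=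
          mul_le_mul_of_nonneg_right (htail ht) (Real.exp_nonneg _)
      _ = C * Real.exp ((lam - A) * t) := by rw [mul_assoc, ← Real.exp_add]; ring_nf
      _ ≤ max C 1 * Real.exp (-min A (lam - A) * |t|) := by
        gcongr ?_ * Real.exp ?_
        · exact le_max_left _ _
        · rw [abs_of_neg ht]; nlinarith [min_le_right A (lam - A)]
  · calc x * Real.exp (-A * t) ≤ 1 * Real.exp (-A * t) :=
          mul_le_mul_of_nonneg_right hx1 (Real.exp_nonneg _)
      _ ≤ max C 1 * Real.exp (-min A (lam - A) * |t|) := by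
        gcongr ?_ * Real.exp ?_
        · exact le_max_right _ _
        · rw [abs_of_nonneg ht]; nlinarith [min_le_left A (lam - A)]

noncomputable def dampedFourier (A : ℝ) (f : ℝ → ℝ) (y : ℝ) : ℂ :=
  ∫ t : ℝ, ((f t * Real.exp (-A * t) : ℝ) : ℂ) * Complex.exp (I * t * y)

lemma dampedFourier_zero (A : ℝ) (f : ℝ → ℝ) :
    dampedFourier A f 0 = ((∫ t : ℝ, f t * Real.exp (-A * t) : ℝ) : ℂ) := by
  simp only [dampedFourier, ofReal_zero, mul_zero, Complex.exp_zero, mul_one]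
  exact integral_ofReal

lemma tendsto_dampedFourier_of_ae_tendsto {ι : Type*} {l : Filter ι} [l.IsCountablyGenerated]
    {F : ι → ℝ → ℝ} {G b : ℝ → ℝ} {A : ℝ} (hF : ∀ i, AEStronglyMeasurable (F i))
    (hb : Integrable b) (hFb : ∀ᶠ i in l, ∀ t, |F i t * Real.exp (-A * t)| ≤ b t)
    (hFG : ∀ᵐ t, Tendsto (fun i => F i t) l (𝓝 (G t))) (y : ℝ) :
    Tendsto (fun i => dampedFourier A (F i) y) l (𝓝 (dampedFourier A G y)) := by
  refine tendsto_integral_filter_of_dominated_convergence b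
    (Eventually.of_forall fun i => ?_) ?_ hb ?_
  · exact (continuous_ofReal.comp_aestronglyMeasurable ((hF i).mul (by fun_prop))).mul
      (by fun_prop)
  · filter_upwards [hFb] with i hi
    exact ae_of_all _ fun t => by
      rw [norm_mul, norm_cexp_I_mul_ofReal_mul_ofReal, mul_one, norm_real, Real.norm_eq_abs]
      exact hi t
  · filter_upwards [hFG] with t ht
    exact (((ht.mul_const _).ofReal).mul_const _)

lemma tendsto_dampedFourier_cdf {P : ℕ → ProbabilityMeasure ℝ} {ν : ProbabilityMeasure ℝ}
    (hP : Tendsto P atTop (𝓝 ν)) {C lam A : ℝ} (hA0 : 0 < A) (hA : A < lam)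
    (htail : ∀ᶠ n in atTop, ∀ t < 0, cdf (P n) t ≤ C * Real.exp (lam * t)) :
    Integrable (fun t => cdf ν t * Real.exp (-A * t)) ∧
      ∀ y, Tendsto (fun n => dampedFourier A (cdf (P n)) y) atTop
        (𝓝 (dampedFourier A (cdf ν) y)) := by
  set b : ℝ → ℝ := fun t => max C 1 * Real.exp (-min A (lam - A) * |t|)
  have hb : Integrable b := (integrable_exp_neg_mul_abs (lt_min hA0 (sub_pos.2 hA))).const_mul _
  have hPb : ∀ᶠ n in atTop, ∀ t, |cdf (P n) t * Real.exp (-A * t)| ≤ b t := by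
    filter_upwards [htail] with n hn t
    exact abs_mul_exp_neg_le (cdf_nonneg _ _) (cdf_le_one _ _) (hn t)
  have hlim : ∀ᵐ t, Tendsto (fun n => cdf (P n) t) atTop (𝓝 (cdf ν t)) := by
    filter_upwards [(monotone_cdf ν).countable_not_continuousAt.ae_notMem volume] with t ht
    exact ProbabilityMeasure.tendsto_cdf_of_tendsto hP (not_not.1 ht)
  refine ⟨hb.mono' ((monotone_cdf ν).measurable.aestronglyMeasurable.mul (by fun_prop)) ?_,
    tendsto_dampedFourier_of_ae_tendsto (fun n => (monotone_cdf _).measurable.aestronglyMeasurable)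
      hb hPb hlim⟩
  filter_upwards [hlim] with t ht
  exact le_of_tendsto ((ht.mul_const _).abs) (hPb.mono fun n hn => hn t)

lemma integral_cdf_mul_exp_pos (ν : Measure ℝ) {A : ℝ}
    (hint : Integrable fun t => cdf ν t * Real.exp (-A * t)) :
    0 < ∫ t, cdf ν t * Real.exp (-A * t) := by
  rw [integral_pos_iff_support_of_nonneg (fun t => mul_nonneg (cdf_nonneg _ _) (Real.exp_nonneg _))
    hint]
  obtain ⟨M, hM⟩ := eventually_atTop.1 ((tendsto_cdf_atTop ν).eventually_const_lt one_pos)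
  refine (measure_mono (s := Ici M) fun t ht => ?_).trans_lt' (by simp)
  exact mul_ne_zero (hM t ht).ne' (Real.exp_ne_zero _)

lemma cdf_eq_of_dampedFourier_eq (ν : Measure ℝ) {A : ℝ} {Φ : ℝ → ℝ} (hΦ : Continuous Φ)
    (hint : Integrable fun t => cdf ν t * Real.exp (-A * t))
    (h : ∀ y, dampedFourier A (cdf ν) y = dampedFourier A Φ y) : cdf ν = Φ := by
  -- otherwise `dampedFourier A Φ 0` would be the junk value `0` of a non-integrable integral
  have hΦint : Integrable fun t => Φ t * Real.exp (-A * t) := by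
    by_contra hΦint
    have h0 := h 0
    rw [dampedFourier_zero, dampedFourier_zero, integral_undef hΦint, ofReal_inj] at h0
    exact (integral_cdf_mul_exp_pos ν hint).ne' h0
  have hcont : ∀ v, ContinuousAt (cdf ν) v → cdf ν v = Φ v := fun v hv =>
    mul_right_cancel₀ (Real.exp_ne_zero (-A * v)) <| ofReal_injective <|
      eq_of_integral_mul_cexp_eq hint.ofReal hΦint.ofReal h
        (continuous_ofReal.continuousAt.comp (hv.mul (by fun_prop))) (by fun_prop)
  funext x
  exact eq_of_continuousWithinAt_Ioi_of_eqOn_dense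
    ((monotone_cdf ν).countable_not_continuousAt.dense_compl ℝ)
    (fun v hv => hcont v (not_not.1 hv))
    (((cdf ν).right_continuous x).mono Ioi_subset_Ici_self) hΦ.continuousWithinAt

theorem weak_convergence_from_damped_fourier_general
    (μ : ℕ → Measure ℝ) (hprob : ∀ N, IsProbabilityMeasure (μ N))
    (htight : ∀ ε > (0 : ℝ), ∃ M : ℝ, ∀ N, ((μ N) (Set.Icc (-M) M)ᶜ).toReal ≤ ε)
    (C lam : ℝ) (N₁ : ℕ)
    (htail : ∀ N : ℕ, N₁ ≤ N → ∀ z < (0 : ℝ),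
      ((μ N) (Set.Iic z)).toReal ≤ C * Real.exp (lam * z))
    (A : ℝ) (hA0 : 0 < A) (hA : A < lam)
    (Φ : ℝ → ℝ) (hΦc : Continuous Φ)
    (hconv : ∀ r y : ℝ,
      Tendsto
        (fun N : ℕ => ∫ z : ℝ,
          (((μ N) (Set.Iic (z + r))).toReal * Real.exp (-A * z) : ℂ)
            * Complex.exp (Complex.I * z * y))
        atTop
        (nhds (∫ z : ℝ,
          ((Φ (z + r) * Real.exp (-A * z) : ℝ) : ℂ) * Complex.exp (Complex.I * z * y)))) :
    ∀ z : ℝ, Tendsto (fun N : ℕ => ((μ N) (Set.Iic z)).toReal) atTop (nhds (Φ z)) := by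
  intro z
  let P : ℕ → ProbabilityMeasure ℝ := fun N => ⟨μ N, hprob N⟩
  have hcdf : ∀ N t, cdf (P N) t = (μ N (Iic t)).toReal := fun N t => cdf_eq_real _ t
  have hconv₀ : ∀ y, Tendsto (fun N => dampedFourier A (cdf (P N)) y) atTop
      (𝓝 (dampedFourier A Φ y)) := fun y => by
    simpa only [dampedFourier, hcdf, add_zero, ofReal_mul] using hconv 0 y
  simp_rw [← hcdf]
  refine tendsto_of_subseq_tendsto fun ns hns => ?_
  obtain ⟨ν, φ, hφ, hlim⟩ := ProbabilityMeasure.exists_subseq_tendsto_of_isTightMeasureSet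
    (P := P ∘ ns) (isTightMeasureSet_range_of_measureReal_compl_Icc_le fun ε hε =>
      (htight ε hε).imp fun M hM n => hM (ns n))
  have hsub : Tendsto (ns ∘ φ) atTop atTop := hns.comp hφ.tendsto_atTop
  obtain ⟨hint, hfourier⟩ := tendsto_dampedFourier_cdf hlim hA0 hA
    ((hsub.eventually_ge_atTop N₁).mono fun k hk t ht => (hcdf _ t).trans_le (htail _ hk t ht))
  have hν : cdf ν = Φ := cdf_eq_of_dampedFourier_eq ν hΦc hint fun y =>
    tendsto_nhds_unique (hfourier y) ((hconv₀ y).comp hsub)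
  refine ⟨φ, ?_⟩
  simpa [hν] using ProbabilityMeasure.tendsto_cdf_of_tendsto hlim (x := z)
    (by rw [hν]; exact hΦc.continuousAt)

/-- Uniqueness of the weak limit via damped Fourier transforms: if the laws `μ N` are
tight, have the uniform lower-tail bound `F_N(z) ≤ C e^{λ z}` for `z < 0`, and for some
`0 < A < λ` the damped Fourier transforms of the CDFs converge to those of a continuous
function `Φ` with `Φ(·+r) e^{-A·} ∈ L²`, then the CDFs converge pointwise to `Φ`,
i.e. the random variables converge weakly to the law with CDF `Φ`. -/
theorem weak_convergence_from_damped_fourier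
    (μ : ℕ → Measure ℝ) (hprob : ∀ N, IsProbabilityMeasure (μ N))
    (htight : ∀ ε > (0 : ℝ), ∃ M : ℝ, ∀ N, ((μ N) (Set.Icc (-M) M)ᶜ).toReal ≤ ε)
    (C lam : ℝ) (hC : 0 < C) (hlam : 0 < lam) (N₁ : ℕ)
    (htail : ∀ N : ℕ, N₁ ≤ N → ∀ z < (0 : ℝ),
      ((μ N) (Set.Iic z)).toReal ≤ C * Real.exp (lam * z))
    (A : ℝ) (hA0 : 0 < A) (hA : A < lam)
    (Φ : ℝ → ℝ) (hΦc : Continuous Φ)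
    (hL2 : ∀ r : ℝ, MemLp (fun z => Φ (z + r) * Real.exp (-A * z)) 2 volume)
    (hconv : ∀ r y : ℝ,
      Tendsto
        (fun N : ℕ => ∫ z : ℝ,
          (((μ N) (Set.Iic (z + r))).toReal * Real.exp (-A * z) : ℂ)
            * Complex.exp (Complex.I * z * y))
        atTop
        (nhds (∫ z : ℝ,
          ((Φ (z + r) * Real.exp (-A * z) : ℝ) : ℂ) * Complex.exp (Complex.I * z * y)))) :
    ∀ z : ℝ, Tendsto (fun N : ℕ => ((μ N) (Set.Iic z)).toReal) atTop (nhds (Φ z)) :=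
  weak_convergence_from_damped_fourier_general μ hprob htight C lam N₁ htail A hA0 hA Φ hΦc hconv
end
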